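/- arXiv:2011.06511 — 3 statements merged into one kernel-verified Lean document; each statement's English description precedes it below -/
import Mathlib

section
/- For the Lie–Cartan vector field of F(u,v,p) = −ε₁v − 2ε₁up + vp² at the singular point (0,0,0), the eigenvalues of the projection of the linearization (onto the (u,p)-plane) are 2 and −3 when ε₁ = −1, so the singular point is a hyperbolic saddle. -/
noncomputable section

open Matrix

/-- Partial derivative in the first variable. -/
def pd1 (f : ℝ → ℝ → ℝ) (u v : ℝ) : ℝ := deriv (fun t => f t v) u

/-- Partial derivative in the second variable. -/
def pd2 (f : ℝ → ℝ → ℝ) (u v : ℝ) : ℝ := deriv (fun t => f u t) v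

/-- The Lie–Cartan vector field `X = (F_p, p F_p, -(F_u + p F_v))`. -/
def lieCartan (F : ℝ → ℝ → ℝ → ℝ) (u v p : ℝ) : ℝ × ℝ × ℝ :=
  (deriv (fun t => F u v t) p,
   p * deriv (fun t => F u v t) p,
   -(deriv (fun t => F t v p) u + p * deriv (fun t => F u t p) v))

/-- The `2×2` block (in the `(u,p)` directions, along `v = 0`) of the linearization of the
Lie–Cartan vector field at the origin. -/
def lieCartanBlock (F : ℝ → ℝ → ℝ → ℝ) : Matrix (Fin 2) (Fin 2) ℝ :=
  !![pd1 (fun u p => (lieCartan F u 0 p).1) 0 0, pd2 (fun u p => (lieCartan F u 0 p).1) 0 0;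
     pd1 (fun u p => (lieCartan F u 0 p).2.2) 0 0, pd2 (fun u p => (lieCartan F u 0 p).2.2) 0 0]

/-! For `F = a v + b u p + v p²` the Lie–Cartan field is
`X = (b u + 2 v p, p (b u + 2 v p), -(a + b) p - p³)`, so its `(u,p)`-block at the origin is
`diag(b, -(a + b))`. The flat affine umbilic with `ε₁ = -1` is the case `a = 1`, `b = 2`. -/

theorem Matrix.det_diagonal_sub_smul_one_self {n R : Type*} [Fintype n] [DecidableEq n]
    [CommRing R] (d : n → R) (i : n) : (diagonal d - d i • (1 : Matrix n n R)).det = 0 := by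
  rw [smul_one_eq_diagonal, diagonal_sub, det_diagonal]
  exact Finset.prod_eq_zero (Finset.mem_univ i) (sub_self (d i))

theorem lieCartan_affineUmbilic (a b u v p : ℝ) :
    lieCartan (fun u v p => a * v + b * u * p + v * p ^ 2) u v p =
      (b * u + 2 * v * p, p * (b * u + 2 * v * p), -(b * p + p * (a + p ^ 2))) := by
  have hp : HasDerivAt (fun t => a * v + b * u * t + v * t ^ 2) (b * u + 2 * v * p) p :=
    ((((hasDerivAt_id' p).const_mul (b * u)).const_add (a * v)).add
      ((hasDerivAt_pow 2 p).const_mul v)).congr_deriv (by norm_num; ring)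
  have hu : HasDerivAt (fun t => a * v + b * t * p + v * p ^ 2) (b * p) u :=
    (((((hasDerivAt_id' u).const_mul b).mul_const p).const_add (a * v)).add_const
      (v * p ^ 2)).congr_deriv (by ring)
  have hv : HasDerivAt (fun t => a * t + b * u * p + t * p ^ 2) (a + p ^ 2) v :=
    ((((hasDerivAt_id' v).const_mul a).add_const (b * u * p)).add
      ((hasDerivAt_id' v).mul_const (p ^ 2))).congr_deriv (by ring)
  simp only [lieCartan, hp.deriv, hu.deriv, hv.deriv]

theorem lieCartanBlock_affineUmbilic (a b : ℝ) :
    lieCartanBlock (fun u v p => a * v + b * u * p + v * p ^ 2) = diagonal ![b, -(a + b)] := by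
  have h1 : HasDerivAt (fun t : ℝ => b * t + 2 * 0 * 0) b 0 :=
    (((hasDerivAt_id' (0 : ℝ)).const_mul b).add_const _).congr_deriv (by ring)
  have h3 : HasDerivAt (fun t : ℝ => -(b * t + t * (a + t ^ 2))) (-(a + b)) 0 :=
    (((hasDerivAt_id' (0 : ℝ)).const_mul b).add
      ((hasDerivAt_id' (0 : ℝ)).mul ((hasDerivAt_pow 2 (0 : ℝ)).const_add a))).neg.congr_deriv
      (by norm_num; ring)
  simp only [lieCartanBlock, pd1, pd2, lieCartan_affineUmbilic, h1.deriv, h3.deriv]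
  ext i j
  fin_cases i <;> fin_cases j <;> simp

/-- For the Lie–Cartan field of `F(u,v,p) = -ε₁v - 2ε₁up + vp²` with
`ε₁ = -1`, at the singular point `(0,0,0)` the eigenvalues of the projection of the
linearization onto the `(u,p)`-plane are `2` and `-3`; in particular their product is
negative, i.e. the singular point is a hyperbolic saddle. -/
theorem lieCartan_flat_affine_umbilic_saddle (e : ℝ) (he : e = -1)
    (F : ℝ → ℝ → ℝ → ℝ)
    (hF : F = fun u v p => -e * v - 2 * e * u * p + v * p ^ 2) :
    lieCartan F 0 0 0 = 0 ∧
    Matrix.det (lieCartanBlock F - (2 : ℝ) • (1 : Matrix (Fin 2) (Fin 2) ℝ)) = 0 ∧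
    Matrix.det (lieCartanBlock F - (-3 : ℝ) • (1 : Matrix (Fin 2) (Fin 2) ℝ)) = 0 ∧
    (2 : ℝ) * (-3) < 0 := by
  have hF' : F = fun u v p => 1 * v + 2 * u * p + v * p ^ 2 := by
    subst he hF
    funext u v p
    ring
  have hblock : lieCartanBlock F = diagonal ![2, -3] := by
    rw [hF', lieCartanBlock_affineUmbilic]
    norm_num
  refine ⟨?_, ?_, ?_, by norm_num⟩
  · rw [hF', lieCartan_affineUmbilic]
    simp
  · simpa [hblock] using det_diagonal_sub_smul_one_self ![(2 : ℝ), -3] 0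
  · simpa [hblock] using det_diagonal_sub_smul_one_self ![(2 : ℝ), -3] 1

end
end

section
/- With h(u,v) in Pick normal form with parameters ε, σ, q_ij, if q₂₂ = −ε(−2σ² + q₄₀) and q₃₁ = −εq₁₃ then l(0,0) = m(0,0) = 0, so the origin is an affine parabolic point, and if additionally n(0,0) ≠ 0, the unique affine asymptotic direction at the origin is (1,0), i.e., determined by v' = 0. -/
noncomputable section

open Matrix

/-- Componentwise partial derivative in the first variable of an `ℝ³`-valued map. -/
def vpd1 (f : ℝ → ℝ → Fin 3 → ℝ) (u v : ℝ) : Fin 3 → ℝ :=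
  fun i => pd1 (fun a b => f a b i) u v

/-- Componentwise partial derivative in the second variable of an `ℝ³`-valued map. -/
def vpd2 (f : ℝ → ℝ → Fin 3 → ℝ) (u v : ℝ) : Fin 3 → ℝ :=
  fun i => pd2 (fun a b => f a b i) u v

/-- Determinant of three vectors in `ℝ³`. -/
def detV (x y z : Fin 3 → ℝ) : ℝ := Matrix.det (Matrix.of ![x, y, z])

/-- `L = det(α_u, α_v, α_uu)`. -/
def Lcoef (α : ℝ → ℝ → Fin 3 → ℝ) (u v : ℝ) : ℝ :=
  detV (vpd1 α u v) (vpd2 α u v) (vpd1 (vpd1 α) u v)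

/-- `M = det(α_u, α_v, α_uv)`. -/
def Mcoef (α : ℝ → ℝ → Fin 3 → ℝ) (u v : ℝ) : ℝ :=
  detV (vpd1 α u v) (vpd2 α u v) (vpd2 (vpd1 α) u v)

/-- `N = det(α_u, α_v, α_vv)`. -/
def Ncoef (α : ℝ → ℝ → Fin 3 → ℝ) (u v : ℝ) : ℝ :=
  detV (vpd1 α u v) (vpd2 α u v) (vpd2 (vpd2 α) u v)

/-- The co-normal vector `ν = |LN - M²|^{-1/4} (α_u ∧ α_v)`. -/
def conormal (α : ℝ → ℝ → Fin 3 → ℝ) (u v : ℝ) : Fin 3 → ℝ :=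
  (|Lcoef α u v * Ncoef α u v - (Mcoef α u v) ^ 2| ^ (-(1 / 4 : ℝ))) •
    (crossProduct (vpd1 α u v) (vpd2 α u v))

/-- The affine (Blaschke) normal `ξ = |LN - M²|^{-1/4} (ν_u ∧ ν_v)`. -/
def affNormal (α : ℝ → ℝ → Fin 3 → ℝ) (u v : ℝ) : Fin 3 → ℝ :=
  (|Lcoef α u v * Ncoef α u v - (Mcoef α u v) ^ 2| ^ (-(1 / 4 : ℝ))) •
    (crossProduct (vpd1 (conormal α) u v) (vpd2 (conormal α) u v))

/-- `l = ⟨ν_u, ξ_u⟩`, coefficient of the affine third fundamental form. -/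
def lA (α : ℝ → ℝ → Fin 3 → ℝ) (u v : ℝ) : ℝ :=
  vpd1 (conormal α) u v ⬝ᵥ vpd1 (affNormal α) u v

/-- `m = ⟨ν_u, ξ_v⟩`. -/
def mA (α : ℝ → ℝ → Fin 3 → ℝ) (u v : ℝ) : ℝ :=
  vpd1 (conormal α) u v ⬝ᵥ vpd2 (affNormal α) u v

/-- `n = ⟨ν_v, ξ_v⟩`. -/
def nA (α : ℝ → ℝ → Fin 3 → ℝ) (u v : ℝ) : ℝ :=
  vpd2 (conormal α) u v ⬝ᵥ vpd2 (affNormal α) u v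

/-- Monge chart `α(u,v) = (u, v, h(u,v))`. -/
def monge (h : ℝ → ℝ → ℝ) (u v : ℝ) : Fin 3 → ℝ := ![u, v, h u v]




/-- uncurried smoothness -/
def Sm (f : ℝ → ℝ → ℝ) : Prop := ContDiff ℝ (⊤ : ℕ∞) (fun p : ℝ × ℝ => f p.1 p.2)

lemma Sm.hasDerivAt1 {f : ℝ → ℝ → ℝ} (hf : Sm f) (u v : ℝ) :
    HasDerivAt (fun t => f t v) (pd1 f u v) u := by
  have : DifferentiableAt ℝ (fun t => f t v) u :=
    ((hf.differentiable (by simp)).comp (differentiable_id.prodMk (differentiable_const v))).differentiableAt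
  exact this.hasDerivAt

lemma Sm.hasDerivAt2 {f : ℝ → ℝ → ℝ} (hf : Sm f) (u v : ℝ) :
    HasDerivAt (fun t => f u t) (pd2 f u v) v := by
  have : DifferentiableAt ℝ (fun t => f u t) v :=
    ((hf.differentiable (by simp)).comp ((differentiable_const u).prodMk differentiable_id)).differentiableAt
  exact this.hasDerivAt

lemma pd1_eq_fderiv {f : ℝ → ℝ → ℝ} (hf : Sm f) (u v : ℝ) :
    pd1 f u v = fderiv ℝ (fun p : ℝ × ℝ => f p.1 p.2) (u, v) (1, 0) := by
  have hc : HasDerivAt (fun t : ℝ => (t, v)) ((1 : ℝ), (0 : ℝ)) u :=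
    (hasDerivAt_id u).prodMk (hasDerivAt_const u v)
  have hF : HasFDerivAt (fun p : ℝ × ℝ => f p.1 p.2)
      (fderiv ℝ (fun p : ℝ × ℝ => f p.1 p.2) (u, v)) (u, v) :=
    (hf.differentiable (by simp) (u, v)).hasFDerivAt
  have := hF.comp_hasDerivAt u hc
  exact ((hf.hasDerivAt1 u v).unique this)

lemma pd2_eq_fderiv {f : ℝ → ℝ → ℝ} (hf : Sm f) (u v : ℝ) :
    pd2 f u v = fderiv ℝ (fun p : ℝ × ℝ => f p.1 p.2) (u, v) (0, 1) := by
  have hc : HasDerivAt (fun t : ℝ => (u, t)) ((0 : ℝ), (1 : ℝ)) v :=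
    (hasDerivAt_const v u).prodMk (hasDerivAt_id v)
  have hF : HasFDerivAt (fun p : ℝ × ℝ => f p.1 p.2)
      (fderiv ℝ (fun p : ℝ × ℝ => f p.1 p.2) (u, v)) (u, v) :=
    (hf.differentiable (by simp) (u, v)).hasFDerivAt
  have := hF.comp_hasDerivAt v hc
  exact ((hf.hasDerivAt2 u v).unique this)

lemma Sm.pdv {f : ℝ → ℝ → ℝ} (hf : Sm f) (w : ℝ × ℝ) :
    Sm (fun u v => fderiv ℝ (fun p : ℝ × ℝ => f p.1 p.2) (u, v) w) := by
  have h1 : ContDiff ℝ (⊤ : ℕ∞) (fderiv ℝ (fun p : ℝ × ℝ => f p.1 p.2)) :=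
    hf.fderiv_right (by simp)
  exact (h1.clm_apply contDiff_const).comp (contDiff_id)

lemma Sm.pd1 {f : ℝ → ℝ → ℝ} (hf : Sm f) : Sm (_root_.pd1 f) := by
  have h := hf.pdv (1, 0)
  unfold Sm at h ⊢
  rw [show (fun p : ℝ × ℝ => _root_.pd1 f p.1 p.2)
    = (fun p : ℝ × ℝ => fderiv ℝ (fun q : ℝ × ℝ => f q.1 q.2) (p.1, p.2) (1, 0)) from
    funext fun p => pd1_eq_fderiv hf p.1 p.2]
  exact h

lemma Sm.pd2 {f : ℝ → ℝ → ℝ} (hf : Sm f) : Sm (_root_.pd2 f) := by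
  have h := hf.pdv (0, 1)
  unfold Sm at h ⊢
  rw [show (fun p : ℝ × ℝ => _root_.pd2 f p.1 p.2)
    = (fun p : ℝ × ℝ => fderiv ℝ (fun q : ℝ × ℝ => f q.1 q.2) (p.1, p.2) (0, 1)) from
    funext fun p => pd2_eq_fderiv hf p.1 p.2]
  exact h

/-- vanishing jet predicate -/
def Jet (n : ℕ) (f : ℝ → ℝ → ℝ) : Prop :=
  Sm f ∧ ∀ k : ℕ, k ≤ n → iteratedFDeriv ℝ k (fun p : ℝ × ℝ => f p.1 p.2) (0, 0) = 0

lemma Jet.zero {n : ℕ} {f : ℝ → ℝ → ℝ} (hf : Jet n f) : f 0 0 = 0 := by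
  have h := hf.2 0 (Nat.zero_le n)
  have := congrArg (fun (Φ : ContinuousMultilinearMap ℝ (fun _ : Fin 0 => ℝ × ℝ) ℝ) =>
    Φ (fun _ => 0)) h
  simpa [iteratedFDeriv_zero_apply] using this

lemma Jet.pdw {n : ℕ} {f : ℝ → ℝ → ℝ} (hf : Jet (n + 1) f) (w : ℝ × ℝ) :
    Jet n (fun u v => fderiv ℝ (fun p : ℝ × ℝ => f p.1 p.2) (u, v) w) := by
  obtain ⟨hsm, hj⟩ := hf
  refine ⟨hsm.pdv w, fun k hk => ?_⟩
  ext m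
  have h1 : (iteratedFDeriv ℝ k
      (fun p : ℝ × ℝ => fderiv ℝ (fun q : ℝ × ℝ => f q.1 q.2) p w) (0, 0)) m =
      (iteratedFDeriv ℝ k (fderiv ℝ (fun q : ℝ × ℝ => f q.1 q.2)) (0, 0)) m w := by
    exact iteratedFDeriv_clm_apply_const_apply (hsm.fderiv_right (m := ((⊤ : ℕ∞) : WithTop ℕ∞)) (by exact_mod_cast le_top)) (by exact_mod_cast (le_top : (k : ℕ∞) ≤ ⊤))
  have h3 := hj (k + 1) (by omega)
  have h2 := iteratedFDeriv_succ_apply_right (𝕜 := ℝ) (f := fun q : ℝ × ℝ => f q.1 q.2)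
    (x := ((0 : ℝ), (0 : ℝ))) (n := k) (Fin.snoc m w)
  rw [h3] at h2
  simp only [Fin.init_snoc, Fin.snoc_last, ContinuousMultilinearMap.zero_apply] at h2
  simp only [ContinuousMultilinearMap.zero_apply]
  rw [h1, ← h2]

lemma Jet.pd1 {n : ℕ} {f : ℝ → ℝ → ℝ} (hf : Jet (n + 1) f) : Jet n (_root_.pd1 f) := by
  have h := hf.pdw (1, 0)
  have he : (fun u v => fderiv ℝ (fun p : ℝ × ℝ => f p.1 p.2) (u, v) ((1 : ℝ), (0 : ℝ)))
      = _root_.pd1 f := by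
    funext u v; exact (pd1_eq_fderiv hf.1 u v).symm
  rwa [he] at h

lemma Jet.pd2 {n : ℕ} {f : ℝ → ℝ → ℝ} (hf : Jet (n + 1) f) : Jet n (_root_.pd2 f) := by
  have h := hf.pdw (0, 1)
  have he : (fun u v => fderiv ℝ (fun p : ℝ × ℝ => f p.1 p.2) (u, v) ((0 : ℝ), (1 : ℝ)))
      = _root_.pd2 f := by
    funext u v; exact (pd2_eq_fderiv hf.1 u v).symm
  rwa [he] at h

lemma hasDerivAt_quartic (a b c d e t : ℝ) :
    HasDerivAt (fun x : ℝ => a + b * x + c * x ^ 2 + d * x ^ 3 + e * x ^ 4)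
      (b + 2 * c * t + 3 * d * t ^ 2 + 4 * e * t ^ 3) t := by
  have h : HasDerivAt (fun x : ℝ => a + b * x + c * x ^ 2 + d * x ^ 3 + e * x ^ 4)
      (0 + b * 1 + c * ((2 : ℕ) * t ^ 1) + d * ((3 : ℕ) * t ^ 2) + e * ((4 : ℕ) * t ^ 3)) t :=
    ((((hasDerivAt_const t a).add ((hasDerivAt_id t).const_mul b)).add
      ((hasDerivAt_pow 2 t).const_mul c)).add ((hasDerivAt_pow 3 t).const_mul d)).add
      ((hasDerivAt_pow 4 t).const_mul e)
  convert h using 1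
  push_cast; ring

lemma vpd1_monge (h : ℝ → ℝ → ℝ) : vpd1 (monge h) = fun u v => ![1, 0, pd1 h u v] := by
  funext u v i
  fin_cases i
  · show pd1 (fun a b => monge h a b 0) u v = 1
    simp only [monge, Matrix.cons_val_zero, pd1]
    exact deriv_id u
  · show pd1 (fun a b => monge h a b 1) u v = 0
    simp only [monge, Matrix.cons_val_one, Matrix.head_cons, pd1]
    exact deriv_const u v
  · show pd1 (fun a b => monge h a b 2) u v = pd1 h u v
    simp only [monge, Matrix.cons_val_two, Matrix.tail_cons, Matrix.head_cons]

lemma vpd2_monge (h : ℝ → ℝ → ℝ) : vpd2 (monge h) = fun u v => ![0, 1, pd2 h u v] := by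
  funext u v i
  fin_cases i
  · show pd2 (fun a b => monge h a b 0) u v = 0
    simp only [monge, Matrix.cons_val_zero, pd2]
    exact deriv_const v u
  · show pd2 (fun a b => monge h a b 1) u v = 1
    simp only [monge, Matrix.cons_val_one, Matrix.head_cons, pd2]
    exact deriv_id v
  · show pd2 (fun a b => monge h a b 2) u v = pd2 h u v
    simp only [monge, Matrix.cons_val_two, Matrix.tail_cons, Matrix.head_cons]

lemma vpd1_vpd1_monge (h : ℝ → ℝ → ℝ) :
    vpd1 (vpd1 (monge h)) = fun u v => ![0, 0, pd1 (pd1 h) u v] := by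
  rw [vpd1_monge]
  funext u v i
  fin_cases i
  · show pd1 (fun a b => (![1, 0, pd1 h a b] : Fin 3 → ℝ) 0) u v = 0
    simp only [Matrix.cons_val_zero, pd1]
    exact deriv_const u 1
  · show pd1 (fun a b => (![1, 0, pd1 h a b] : Fin 3 → ℝ) 1) u v = 0
    simp only [Matrix.cons_val_one, Matrix.head_cons, pd1]
    exact deriv_const u 0
  · show pd1 (fun a b => (![1, 0, pd1 h a b] : Fin 3 → ℝ) 2) u v = pd1 (pd1 h) u v
    simp only [Matrix.cons_val_two, Matrix.tail_cons, Matrix.head_cons]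

lemma vpd2_vpd1_monge (h : ℝ → ℝ → ℝ) :
    vpd2 (vpd1 (monge h)) = fun u v => ![0, 0, pd2 (pd1 h) u v] := by
  rw [vpd1_monge]
  funext u v i
  fin_cases i
  · show pd2 (fun a b => (![1, 0, pd1 h a b] : Fin 3 → ℝ) 0) u v = 0
    simp only [Matrix.cons_val_zero, pd2]
    exact deriv_const v 1
  · show pd2 (fun a b => (![1, 0, pd1 h a b] : Fin 3 → ℝ) 1) u v = 0
    simp only [Matrix.cons_val_one, Matrix.head_cons, pd2]
    exact deriv_const v 0
  · show pd2 (fun a b => (![1, 0, pd1 h a b] : Fin 3 → ℝ) 2) u v = pd2 (pd1 h) u v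
    simp only [Matrix.cons_val_two, Matrix.tail_cons, Matrix.head_cons]

lemma vpd2_vpd2_monge (h : ℝ → ℝ → ℝ) :
    vpd2 (vpd2 (monge h)) = fun u v => ![0, 0, pd2 (pd2 h) u v] := by
  rw [vpd2_monge]
  funext u v i
  fin_cases i
  · show pd2 (fun a b => (![0, 1, pd2 h a b] : Fin 3 → ℝ) 0) u v = 0
    simp only [Matrix.cons_val_zero, pd2]
    exact deriv_const v 0
  · show pd2 (fun a b => (![0, 1, pd2 h a b] : Fin 3 → ℝ) 1) u v = 0
    simp only [Matrix.cons_val_one, Matrix.head_cons, pd2]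
    exact deriv_const v 1
  · show pd2 (fun a b => (![0, 1, pd2 h a b] : Fin 3 → ℝ) 2) u v = pd2 (pd2 h) u v
    simp only [Matrix.cons_val_two, Matrix.tail_cons, Matrix.head_cons]

lemma Lcoef_monge (h : ℝ → ℝ → ℝ) (u v : ℝ) : Lcoef (monge h) u v = pd1 (pd1 h) u v := by
  unfold Lcoef detV
  rw [vpd1_vpd1_monge, vpd1_monge, vpd2_monge]
  rw [Matrix.det_fin_three]
  norm_num [Matrix.vecHead, Matrix.vecTail, Matrix.cons_val_two, Matrix.tail_cons, Matrix.head_cons]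

lemma Mcoef_monge (h : ℝ → ℝ → ℝ) (u v : ℝ) : Mcoef (monge h) u v = pd2 (pd1 h) u v := by
  unfold Mcoef detV
  rw [vpd2_vpd1_monge, vpd1_monge, vpd2_monge]
  rw [Matrix.det_fin_three]
  norm_num [Matrix.vecHead, Matrix.vecTail, Matrix.cons_val_two, Matrix.tail_cons, Matrix.head_cons]

lemma Ncoef_monge (h : ℝ → ℝ → ℝ) (u v : ℝ) : Ncoef (monge h) u v = pd2 (pd2 h) u v := by
  unfold Ncoef detV
  rw [vpd2_vpd2_monge, vpd1_monge, vpd2_monge]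
  rw [Matrix.det_fin_three]
  norm_num [Matrix.vecHead, Matrix.vecTail, Matrix.cons_val_two, Matrix.tail_cons, Matrix.head_cons]

lemma conormal_monge (h : ℝ → ℝ → ℝ) (u v : ℝ) :
    conormal (monge h) u v =
      (|pd1 (pd1 h) u v * pd2 (pd2 h) u v - (pd2 (pd1 h) u v) ^ 2| ^ (-(1 / 4 : ℝ))) •
        ![-(pd1 h u v), -(pd2 h u v), 1] := by
  unfold conormal
  rw [Lcoef_monge, Mcoef_monge, Ncoef_monge, vpd1_monge, vpd2_monge]
  congr 1
  rw [cross_apply]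
  norm_num [Matrix.cons_val_two, Matrix.tail_cons, Matrix.head_cons]


def DDf (h : ℝ → ℝ → ℝ) : ℝ → ℝ → ℝ := fun u v =>
  pd1 (pd1 h) u v * pd2 (pd2 h) u v - pd2 (pd1 h) u v ^ 2

def D1f (h : ℝ → ℝ → ℝ) : ℝ → ℝ → ℝ := fun u v =>
  pd1 (pd1 (pd1 h)) u v * pd2 (pd2 h) u v + pd1 (pd1 h) u v * pd1 (pd2 (pd2 h)) u v -
    2 * pd2 (pd1 h) u v * pd1 (pd2 (pd1 h)) u v

def D2f (h : ℝ → ℝ → ℝ) : ℝ → ℝ → ℝ := fun u v =>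
  pd2 (pd1 (pd1 h)) u v * pd2 (pd2 h) u v + pd1 (pd1 h) u v * pd2 (pd2 (pd2 h)) u v -
    2 * pd2 (pd1 h) u v * pd2 (pd2 (pd1 h)) u v

def Phi (ε : ℝ) (h : ℝ → ℝ → ℝ) : ℝ → ℝ → ℝ := fun u v =>
  (ε * DDf h u v) ^ (-(1 / 4 : ℝ))

def Phi1 (ε : ℝ) (h : ℝ → ℝ → ℝ) : ℝ → ℝ → ℝ := fun u v =>
  -(1 / 4 : ℝ) * (ε * DDf h u v) ^ (-(5 / 4 : ℝ)) * (ε * D1f h u v)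

def Phi2 (ε : ℝ) (h : ℝ → ℝ → ℝ) : ℝ → ℝ → ℝ := fun u v =>
  -(1 / 4 : ℝ) * (ε * DDf h u v) ^ (-(5 / 4 : ℝ)) * (ε * D2f h u v)

lemma abs_eq_sign_mul {ε x : ℝ} (hε : ε = 1 ∨ ε = -1) (hx : 0 < ε * x) : |x| = ε * x := by
  rcases hε with he | he <;> subst he
  · rw [one_mul] at hx ⊢; exact abs_of_pos hx
  · rw [neg_one_mul] at hx ⊢
    rw [abs_of_neg (by linarith)]

/-- In the Pick normal form chart, if `q₂₂ = -ε(-2σ² + q₄₀)` and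
`q₃₁ = -εq₁₃`, then `l(0,0) = m(0,0) = 0` (so the origin is an affine parabolic point),
and if moreover `n(0,0) ≠ 0`, the unique affine asymptotic direction at the origin is
`(1,0)`, i.e. determined by `v' = 0`. -/
theorem affine_parabolic_unique_asymptotic_direction
    (ε σ q40 q31 q22 q13 q04 : ℝ) (hε : ε = 1 ∨ ε = -1)
    (r : ℝ → ℝ → ℝ) (hr : ContDiff ℝ (⊤ : ℕ∞) (fun p : ℝ × ℝ => r p.1 p.2))
    (hjet : ∀ k : ℕ, k ≤ 4 → iteratedFDeriv ℝ k (fun p : ℝ × ℝ => r p.1 p.2) (0, 0) = 0)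
    (h : ℝ → ℝ → ℝ)
    (hdef : h = fun u v => (1 / 2) * (u ^ 2 + ε * v ^ 2) + (σ / 6) * (u ^ 3 - 3 * ε * u * v ^ 2)
      + (1 / 24) * (q40 * u ^ 4 + 4 * q31 * u ^ 3 * v + 6 * q22 * u ^ 2 * v ^ 2
          + 4 * q13 * u * v ^ 3 + q04 * v ^ 4) + r u v)
    (hq22 : q22 = -ε * (-2 * σ ^ 2 + q40)) (hq31 : q31 = -ε * q13) :
    lA (monge h) 0 0 = 0 ∧ mA (monge h) 0 0 = 0 ∧
    lA (monge h) 0 0 * nA (monge h) 0 0 - (mA (monge h) 0 0) ^ 2 = 0 ∧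
    (nA (monge h) 0 0 ≠ 0 → ∀ a b : ℝ, ¬(a = 0 ∧ b = 0) →
      (lA (monge h) 0 0 * a ^ 2 + 2 * mA (monge h) 0 0 * a * b
          + nA (monge h) 0 0 * b ^ 2 = 0 ↔ b = 0)) := by
  have hε2 : ε * ε = 1 := by rcases hε with he | he <;> rw [he] <;> norm_num
  have hSm : Sm h := by
    unfold Sm
    rw [hdef]
    exact ContDiff.add (by fun_prop) hr
  have hrS : Sm r := hr
  have hJ : Jet 4 r := ⟨hr, hjet⟩
  have smr1 : Sm (pd1 (r)) := hrS.pd1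
  have smr2 : Sm (pd2 (r)) := hrS.pd2
  have smr11 : Sm (pd1 (pd1 (r))) := hrS.pd1.pd1
  have smr12 : Sm (pd2 (pd1 (r))) := hrS.pd1.pd2
  have smr21 : Sm (pd1 (pd2 (r))) := hrS.pd2.pd1
  have smr22 : Sm (pd2 (pd2 (r))) := hrS.pd2.pd2
  have smr111 : Sm (pd1 (pd1 (pd1 (r)))) := hrS.pd1.pd1.pd1
  have smr112 : Sm (pd2 (pd1 (pd1 (r)))) := hrS.pd1.pd1.pd2
  have smr121 : Sm (pd1 (pd2 (pd1 (r)))) := hrS.pd1.pd2.pd1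
  have smr122 : Sm (pd2 (pd2 (pd1 (r)))) := hrS.pd1.pd2.pd2
  have smr221 : Sm (pd1 (pd2 (pd2 (r)))) := hrS.pd2.pd2.pd1
  have smr222 : Sm (pd2 (pd2 (pd2 (r)))) := hrS.pd2.pd2.pd2
  have smh1 : Sm (pd1 (h)) := hSm.pd1
  have smh2 : Sm (pd2 (h)) := hSm.pd2
  have smh11 : Sm (pd1 (pd1 (h))) := hSm.pd1.pd1
  have smh12 : Sm (pd2 (pd1 (h))) := hSm.pd1.pd2
  have smh21 : Sm (pd1 (pd2 (h))) := hSm.pd2.pd1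
  have smh22 : Sm (pd2 (pd2 (h))) := hSm.pd2.pd2
  have smh111 : Sm (pd1 (pd1 (pd1 (h)))) := hSm.pd1.pd1.pd1
  have smh112 : Sm (pd2 (pd1 (pd1 (h)))) := hSm.pd1.pd1.pd2
  have smh121 : Sm (pd1 (pd2 (pd1 (h)))) := hSm.pd1.pd2.pd1
  have smh122 : Sm (pd2 (pd2 (pd1 (h)))) := hSm.pd1.pd2.pd2
  have smh221 : Sm (pd1 (pd2 (pd2 (h)))) := hSm.pd2.pd2.pd1
  have smh222 : Sm (pd2 (pd2 (pd2 (h)))) := hSm.pd2.pd2.pd2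
  have id1 : pd1 (h) = fun u v => ((-1/2) * ε * σ) * v ^ 2 + ((1/6) * q13) * v ^ 3 + ((1)) * u ^ 1 + ((1/2) * q22) * u ^ 1 * v ^ 2 + ((1/2) * σ) * u ^ 2 + ((1/2) * q31) * u ^ 2 * v ^ 1 + ((1/6) * q40) * u ^ 3 + pd1 (r) u v := by
    funext u v
    simp only [hdef]
    have hq := hasDerivAt_quartic (((1/2) * ε) * v ^ 2 + ((1/24) * q04) * v ^ 4) (((-1/2) * ε * σ) * v ^ 2 + ((1/6) * q13) * v ^ 3) (((1/2)) + ((1/4) * q22) * v ^ 2) (((1/6) * σ) + ((1/6) * q31) * v ^ 1) (((1/24) * q40)) u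
    rw [show (fun x : ℝ => (((1/2) * ε) * v ^ 2 + ((1/24) * q04) * v ^ 4) + (((-1/2) * ε * σ) * v ^ 2 + ((1/6) * q13) * v ^ 3) * x + (((1/2)) + ((1/4) * q22) * v ^ 2) * x ^ 2 + (((1/6) * σ) + ((1/6) * q31) * v ^ 1) * x ^ 3 + (((1/24) * q40)) * x ^ 4) = (fun t : ℝ => (1 / 2) * (t ^ 2 + ε * v ^ 2) + (σ / 6) * (t ^ 3 - 3 * ε * t * v ^ 2) + (1 / 24) * (q40 * t ^ 4 + 4 * q31 * t ^ 3 * v + 6 * q22 * t ^ 2 * v ^ 2 + 4 * q13 * t * v ^ 3 + q04 * v ^ 4)) from by funext x; ring] at hq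
    have HD := hq.add (hrS.hasDerivAt1 u v)
    exact HD.deriv.trans (by ring)
  have id2 : pd2 (h) = fun u v => ((1) * ε) * v ^ 1 + ((1/6) * q04) * v ^ 3 + ((-1) * ε * σ) * u ^ 1 * v ^ 1 + ((1/2) * q13) * u ^ 1 * v ^ 2 + ((1/2) * q22) * u ^ 2 * v ^ 1 + ((1/6) * q31) * u ^ 3 + pd2 (r) u v := by
    funext u v
    simp only [hdef]
    have hq := hasDerivAt_quartic (((1/2)) * u ^ 2 + ((1/6) * σ) * u ^ 3 + ((1/24) * q40) * u ^ 4) (((1/6) * q31) * u ^ 3) (((1/2) * ε) + ((-1/2) * ε * σ) * u ^ 1 + ((1/4) * q22) * u ^ 2) (((1/6) * q13) * u ^ 1) (((1/24) * q04)) v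
    rw [show (fun x : ℝ => (((1/2)) * u ^ 2 + ((1/6) * σ) * u ^ 3 + ((1/24) * q40) * u ^ 4) + (((1/6) * q31) * u ^ 3) * x + (((1/2) * ε) + ((-1/2) * ε * σ) * u ^ 1 + ((1/4) * q22) * u ^ 2) * x ^ 2 + (((1/6) * q13) * u ^ 1) * x ^ 3 + (((1/24) * q04)) * x ^ 4) = (fun t : ℝ => (1 / 2) * (u ^ 2 + ε * t ^ 2) + (σ / 6) * (u ^ 3 - 3 * ε * u * t ^ 2) + (1 / 24) * (q40 * u ^ 4 + 4 * q31 * u ^ 3 * t + 6 * q22 * u ^ 2 * t ^ 2 + 4 * q13 * u * t ^ 3 + q04 * t ^ 4)) from by funext x; ring] at hq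
    have HD := hq.add (hrS.hasDerivAt2 u v)
    exact HD.deriv.trans (by ring)
  have id11 : pd1 (pd1 (h)) = fun u v => ((1)) + ((1/2) * q22) * v ^ 2 + ((1) * σ) * u ^ 1 + ((1) * q31) * u ^ 1 * v ^ 1 + ((1/2) * q40) * u ^ 2 + pd1 (pd1 (r)) u v := by
    funext u v
    simp only [id1]
    have hq := hasDerivAt_quartic (((-1/2) * ε * σ) * v ^ 2 + ((1/6) * q13) * v ^ 3) (((1)) + ((1/2) * q22) * v ^ 2) (((1/2) * σ) + ((1/2) * q31) * v ^ 1) (((1/6) * q40)) ((0:ℝ)) u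
    rw [show (fun x : ℝ => (((-1/2) * ε * σ) * v ^ 2 + ((1/6) * q13) * v ^ 3) + (((1)) + ((1/2) * q22) * v ^ 2) * x + (((1/2) * σ) + ((1/2) * q31) * v ^ 1) * x ^ 2 + (((1/6) * q40)) * x ^ 3 + ((0:ℝ)) * x ^ 4) = (fun t : ℝ => ((-1/2) * ε * σ) * v ^ 2 + ((1/6) * q13) * v ^ 3 + ((1)) * t ^ 1 + ((1/2) * q22) * t ^ 1 * v ^ 2 + ((1/2) * σ) * t ^ 2 + ((1/2) * q31) * t ^ 2 * v ^ 1 + ((1/6) * q40) * t ^ 3) from by funext x; ring] at hq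
    have HD := hq.add (smr1.hasDerivAt1 u v)
    exact HD.deriv.trans (by ring)
  have id12 : pd2 (pd1 (h)) = fun u v => ((-1) * ε * σ) * v ^ 1 + ((1/2) * q13) * v ^ 2 + ((1) * q22) * u ^ 1 * v ^ 1 + ((1/2) * q31) * u ^ 2 + pd2 (pd1 (r)) u v := by
    funext u v
    simp only [id1]
    have hq := hasDerivAt_quartic (((1)) * u ^ 1 + ((1/2) * σ) * u ^ 2 + ((1/6) * q40) * u ^ 3) (((1/2) * q31) * u ^ 2) (((-1/2) * ε * σ) + ((1/2) * q22) * u ^ 1) (((1/6) * q13)) ((0:ℝ)) v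
    rw [show (fun x : ℝ => (((1)) * u ^ 1 + ((1/2) * σ) * u ^ 2 + ((1/6) * q40) * u ^ 3) + (((1/2) * q31) * u ^ 2) * x + (((-1/2) * ε * σ) + ((1/2) * q22) * u ^ 1) * x ^ 2 + (((1/6) * q13)) * x ^ 3 + ((0:ℝ)) * x ^ 4) = (fun t : ℝ => ((-1/2) * ε * σ) * t ^ 2 + ((1/6) * q13) * t ^ 3 + ((1)) * u ^ 1 + ((1/2) * q22) * u ^ 1 * t ^ 2 + ((1/2) * σ) * u ^ 2 + ((1/2) * q31) * u ^ 2 * t ^ 1 + ((1/6) * q40) * u ^ 3) from by funext x; ring] at hq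
    have HD := hq.add (smr1.hasDerivAt2 u v)
    exact HD.deriv.trans (by ring)
  have id21 : pd1 (pd2 (h)) = fun u v => ((-1) * ε * σ) * v ^ 1 + ((1/2) * q13) * v ^ 2 + ((1) * q22) * u ^ 1 * v ^ 1 + ((1/2) * q31) * u ^ 2 + pd1 (pd2 (r)) u v := by
    funext u v
    simp only [id2]
    have hq := hasDerivAt_quartic (((1) * ε) * v ^ 1 + ((1/6) * q04) * v ^ 3) (((-1) * ε * σ) * v ^ 1 + ((1/2) * q13) * v ^ 2) (((1/2) * q22) * v ^ 1) (((1/6) * q31)) ((0:ℝ)) u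
    rw [show (fun x : ℝ => (((1) * ε) * v ^ 1 + ((1/6) * q04) * v ^ 3) + (((-1) * ε * σ) * v ^ 1 + ((1/2) * q13) * v ^ 2) * x + (((1/2) * q22) * v ^ 1) * x ^ 2 + (((1/6) * q31)) * x ^ 3 + ((0:ℝ)) * x ^ 4) = (fun t : ℝ => ((1) * ε) * v ^ 1 + ((1/6) * q04) * v ^ 3 + ((-1) * ε * σ) * t ^ 1 * v ^ 1 + ((1/2) * q13) * t ^ 1 * v ^ 2 + ((1/2) * q22) * t ^ 2 * v ^ 1 + ((1/6) * q31) * t ^ 3) from by funext x; ring] at hq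
    have HD := hq.add (smr2.hasDerivAt1 u v)
    exact HD.deriv.trans (by ring)
  have id22 : pd2 (pd2 (h)) = fun u v => ((1) * ε) + ((1/2) * q04) * v ^ 2 + ((-1) * ε * σ) * u ^ 1 + ((1) * q13) * u ^ 1 * v ^ 1 + ((1/2) * q22) * u ^ 2 + pd2 (pd2 (r)) u v := by
    funext u v
    simp only [id2]
    have hq := hasDerivAt_quartic (((1/6) * q31) * u ^ 3) (((1) * ε) + ((-1) * ε * σ) * u ^ 1 + ((1/2) * q22) * u ^ 2) (((1/2) * q13) * u ^ 1) (((1/6) * q04)) ((0:ℝ)) v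
    rw [show (fun x : ℝ => (((1/6) * q31) * u ^ 3) + (((1) * ε) + ((-1) * ε * σ) * u ^ 1 + ((1/2) * q22) * u ^ 2) * x + (((1/2) * q13) * u ^ 1) * x ^ 2 + (((1/6) * q04)) * x ^ 3 + ((0:ℝ)) * x ^ 4) = (fun t : ℝ => ((1) * ε) * t ^ 1 + ((1/6) * q04) * t ^ 3 + ((-1) * ε * σ) * u ^ 1 * t ^ 1 + ((1/2) * q13) * u ^ 1 * t ^ 2 + ((1/2) * q22) * u ^ 2 * t ^ 1 + ((1/6) * q31) * u ^ 3) from by funext x; ring] at hq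
    have HD := hq.add (smr2.hasDerivAt2 u v)
    exact HD.deriv.trans (by ring)
  have id111 : pd1 (pd1 (pd1 (h))) = fun u v => ((1) * σ) + ((1) * q31) * v ^ 1 + ((1) * q40) * u ^ 1 + pd1 (pd1 (pd1 (r))) u v := by
    funext u v
    simp only [id11]
    have hq := hasDerivAt_quartic (((1)) + ((1/2) * q22) * v ^ 2) (((1) * σ) + ((1) * q31) * v ^ 1) (((1/2) * q40)) ((0:ℝ)) ((0:ℝ)) u
    rw [show (fun x : ℝ => (((1)) + ((1/2) * q22) * v ^ 2) + (((1) * σ) + ((1) * q31) * v ^ 1) * x + (((1/2) * q40)) * x ^ 2 + ((0:ℝ)) * x ^ 3 + ((0:ℝ)) * x ^ 4) = (fun t : ℝ => ((1)) + ((1/2) * q22) * v ^ 2 + ((1) * σ) * t ^ 1 + ((1) * q31) * t ^ 1 * v ^ 1 + ((1/2) * q40) * t ^ 2) from by funext x; ring] at hq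
    have HD := hq.add (smr11.hasDerivAt1 u v)
    exact HD.deriv.trans (by ring)
  have id112 : pd2 (pd1 (pd1 (h))) = fun u v => ((1) * q22) * v ^ 1 + ((1) * q31) * u ^ 1 + pd2 (pd1 (pd1 (r))) u v := by
    funext u v
    simp only [id11]
    have hq := hasDerivAt_quartic (((1)) + ((1) * σ) * u ^ 1 + ((1/2) * q40) * u ^ 2) (((1) * q31) * u ^ 1) (((1/2) * q22)) ((0:ℝ)) ((0:ℝ)) v
    rw [show (fun x : ℝ => (((1)) + ((1) * σ) * u ^ 1 + ((1/2) * q40) * u ^ 2) + (((1) * q31) * u ^ 1) * x + (((1/2) * q22)) * x ^ 2 + ((0:ℝ)) * x ^ 3 + ((0:ℝ)) * x ^ 4) = (fun t : ℝ => ((1)) + ((1/2) * q22) * t ^ 2 + ((1) * σ) * u ^ 1 + ((1) * q31) * u ^ 1 * t ^ 1 + ((1/2) * q40) * u ^ 2) from by funext x; ring] at hq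
    have HD := hq.add (smr11.hasDerivAt2 u v)
    exact HD.deriv.trans (by ring)
  have id121 : pd1 (pd2 (pd1 (h))) = fun u v => ((1) * q22) * v ^ 1 + ((1) * q31) * u ^ 1 + pd1 (pd2 (pd1 (r))) u v := by
    funext u v
    simp only [id12]
    have hq := hasDerivAt_quartic (((-1) * ε * σ) * v ^ 1 + ((1/2) * q13) * v ^ 2) (((1) * q22) * v ^ 1) (((1/2) * q31)) ((0:ℝ)) ((0:ℝ)) u
    rw [show (fun x : ℝ => (((-1) * ε * σ) * v ^ 1 + ((1/2) * q13) * v ^ 2) + (((1) * q22) * v ^ 1) * x + (((1/2) * q31)) * x ^ 2 + ((0:ℝ)) * x ^ 3 + ((0:ℝ)) * x ^ 4) = (fun t : ℝ => ((-1) * ε * σ) * v ^ 1 + ((1/2) * q13) * v ^ 2 + ((1) * q22) * t ^ 1 * v ^ 1 + ((1/2) * q31) * t ^ 2) from by funext x; ring] at hq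
    have HD := hq.add (smr12.hasDerivAt1 u v)
    exact HD.deriv.trans (by ring)
  have id122 : pd2 (pd2 (pd1 (h))) = fun u v => ((-1) * ε * σ) + ((1) * q13) * v ^ 1 + ((1) * q22) * u ^ 1 + pd2 (pd2 (pd1 (r))) u v := by
    funext u v
    simp only [id12]
    have hq := hasDerivAt_quartic (((1/2) * q31) * u ^ 2) (((-1) * ε * σ) + ((1) * q22) * u ^ 1) (((1/2) * q13)) ((0:ℝ)) ((0:ℝ)) v
    rw [show (fun x : ℝ => (((1/2) * q31) * u ^ 2) + (((-1) * ε * σ) + ((1) * q22) * u ^ 1) * x + (((1/2) * q13)) * x ^ 2 + ((0:ℝ)) * x ^ 3 + ((0:ℝ)) * x ^ 4) = (fun t : ℝ => ((-1) * ε * σ) * t ^ 1 + ((1/2) * q13) * t ^ 2 + ((1) * q22) * u ^ 1 * t ^ 1 + ((1/2) * q31) * u ^ 2) from by funext x; ring] at hq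
    have HD := hq.add (smr12.hasDerivAt2 u v)
    exact HD.deriv.trans (by ring)
  have id221 : pd1 (pd2 (pd2 (h))) = fun u v => ((-1) * ε * σ) + ((1) * q13) * v ^ 1 + ((1) * q22) * u ^ 1 + pd1 (pd2 (pd2 (r))) u v := by
    funext u v
    simp only [id22]
    have hq := hasDerivAt_quartic (((1) * ε) + ((1/2) * q04) * v ^ 2) (((-1) * ε * σ) + ((1) * q13) * v ^ 1) (((1/2) * q22)) ((0:ℝ)) ((0:ℝ)) u
    rw [show (fun x : ℝ => (((1) * ε) + ((1/2) * q04) * v ^ 2) + (((-1) * ε * σ) + ((1) * q13) * v ^ 1) * x + (((1/2) * q22)) * x ^ 2 + ((0:ℝ)) * x ^ 3 + ((0:ℝ)) * x ^ 4) = (fun t : ℝ => ((1) * ε) + ((1/2) * q04) * v ^ 2 + ((-1) * ε * σ) * t ^ 1 + ((1) * q13) * t ^ 1 * v ^ 1 + ((1/2) * q22) * t ^ 2) from by funext x; ring] at hq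
    have HD := hq.add (smr22.hasDerivAt1 u v)
    exact HD.deriv.trans (by ring)
  have id222 : pd2 (pd2 (pd2 (h))) = fun u v => ((1) * q04) * v ^ 1 + ((1) * q13) * u ^ 1 + pd2 (pd2 (pd2 (r))) u v := by
    funext u v
    simp only [id22]
    have hq := hasDerivAt_quartic (((1) * ε) + ((-1) * ε * σ) * u ^ 1 + ((1/2) * q22) * u ^ 2) (((1) * q13) * u ^ 1) (((1/2) * q04)) ((0:ℝ)) ((0:ℝ)) v
    rw [show (fun x : ℝ => (((1) * ε) + ((-1) * ε * σ) * u ^ 1 + ((1/2) * q22) * u ^ 2) + (((1) * q13) * u ^ 1) * x + (((1/2) * q04)) * x ^ 2 + ((0:ℝ)) * x ^ 3 + ((0:ℝ)) * x ^ 4) = (fun t : ℝ => ((1) * ε) + ((1/2) * q04) * t ^ 2 + ((-1) * ε * σ) * u ^ 1 + ((1) * q13) * u ^ 1 * t ^ 1 + ((1/2) * q22) * u ^ 2) from by funext x; ring] at hq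
    have HD := hq.add (smr22.hasDerivAt2 u v)
    exact HD.deriv.trans (by ring)
  have V1 : pd1 (h) 0 0 = 0 := by
    simp only [id1]
    rw [show pd1 (r) 0 0 = 0 from Jet.zero (hJ.pd1)]
    norm_num
  have V2 : pd2 (h) 0 0 = 0 := by
    simp only [id2]
    rw [show pd2 (r) 0 0 = 0 from Jet.zero (hJ.pd2)]
    norm_num
  have V11 : pd1 (pd1 (h)) 0 0 = 1 := by
    simp only [id11]
    rw [show pd1 (pd1 (r)) 0 0 = 0 from Jet.zero (hJ.pd1.pd1)]
    norm_num
  have V12 : pd2 (pd1 (h)) 0 0 = 0 := by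
    simp only [id12]
    rw [show pd2 (pd1 (r)) 0 0 = 0 from Jet.zero (hJ.pd1.pd2)]
    norm_num
  have V21 : pd1 (pd2 (h)) 0 0 = 0 := by
    simp only [id21]
    rw [show pd1 (pd2 (r)) 0 0 = 0 from Jet.zero (hJ.pd2.pd1)]
    norm_num
  have V22 : pd2 (pd2 (h)) 0 0 = ε := by
    simp only [id22]
    rw [show pd2 (pd2 (r)) 0 0 = 0 from Jet.zero (hJ.pd2.pd2)]
    norm_num
  have V111 : pd1 (pd1 (pd1 (h))) 0 0 = σ := by
    simp only [id111]
    rw [show pd1 (pd1 (pd1 (r))) 0 0 = 0 from Jet.zero (hJ.pd1.pd1.pd1)]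
    norm_num
  have V221 : pd1 (pd2 (pd2 (h))) 0 0 = -(ε*σ) := by
    simp only [id221]
    rw [show pd1 (pd2 (pd2 (r))) 0 0 = 0 from Jet.zero (hJ.pd2.pd2.pd1)]
    norm_num
  have V121 : pd1 (pd2 (pd1 (h))) 0 0 = 0 := by
    simp only [id121]
    rw [show pd1 (pd2 (pd1 (r))) 0 0 = 0 from Jet.zero (hJ.pd1.pd2.pd1)]
    norm_num
  have V112 : pd2 (pd1 (pd1 (h))) 0 0 = 0 := by
    simp only [id112]
    rw [show pd2 (pd1 (pd1 (r))) 0 0 = 0 from Jet.zero (hJ.pd1.pd1.pd2)]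
    norm_num
  have V222 : pd2 (pd2 (pd2 (h))) 0 0 = 0 := by
    simp only [id222]
    rw [show pd2 (pd2 (pd2 (r))) 0 0 = 0 from Jet.zero (hJ.pd2.pd2.pd2)]
    norm_num
  have V122 : pd2 (pd2 (pd1 (h))) 0 0 = -(ε*σ) := by
    simp only [id122]
    rw [show pd2 (pd2 (pd1 (r))) 0 0 = 0 from Jet.zero (hJ.pd1.pd2.pd2)]
    norm_num
  have id1111 : pd1 (pd1 (pd1 (pd1 (h)))) = fun u v => ((1) * q40) + pd1 (pd1 (pd1 (pd1 (r)))) u v := by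
    funext u v
    simp only [id111]
    have hq := hasDerivAt_quartic (((1) * σ) + ((1) * q31) * v ^ 1) (((1) * q40)) ((0:ℝ)) ((0:ℝ)) ((0:ℝ)) u
    rw [show (fun x : ℝ => (((1) * σ) + ((1) * q31) * v ^ 1) + (((1) * q40)) * x + ((0:ℝ)) * x ^ 2 + ((0:ℝ)) * x ^ 3 + ((0:ℝ)) * x ^ 4) = (fun t : ℝ => ((1) * σ) + ((1) * q31) * v ^ 1 + ((1) * q40) * t ^ 1) from by funext x; ring] at hq
    have HD := hq.add (smr111.hasDerivAt1 u v)
    exact HD.deriv.trans (by ring)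
  have id1112 : pd2 (pd1 (pd1 (pd1 (h)))) = fun u v => ((1) * q31) + pd2 (pd1 (pd1 (pd1 (r)))) u v := by
    funext u v
    simp only [id111]
    have hq := hasDerivAt_quartic (((1) * σ) + ((1) * q40) * u ^ 1) (((1) * q31)) ((0:ℝ)) ((0:ℝ)) ((0:ℝ)) v
    rw [show (fun x : ℝ => (((1) * σ) + ((1) * q40) * u ^ 1) + (((1) * q31)) * x + ((0:ℝ)) * x ^ 2 + ((0:ℝ)) * x ^ 3 + ((0:ℝ)) * x ^ 4) = (fun t : ℝ => ((1) * σ) + ((1) * q31) * t ^ 1 + ((1) * q40) * u ^ 1) from by funext x; ring] at hq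
    have HD := hq.add (smr111.hasDerivAt2 u v)
    exact HD.deriv.trans (by ring)
  have id2211 : pd1 (pd1 (pd2 (pd2 (h)))) = fun u v => ((1) * q22) + pd1 (pd1 (pd2 (pd2 (r)))) u v := by
    funext u v
    simp only [id221]
    have hq := hasDerivAt_quartic (((-1) * ε * σ) + ((1) * q13) * v ^ 1) (((1) * q22)) ((0:ℝ)) ((0:ℝ)) ((0:ℝ)) u
    rw [show (fun x : ℝ => (((-1) * ε * σ) + ((1) * q13) * v ^ 1) + (((1) * q22)) * x + ((0:ℝ)) * x ^ 2 + ((0:ℝ)) * x ^ 3 + ((0:ℝ)) * x ^ 4) = (fun t : ℝ => ((-1) * ε * σ) + ((1) * q13) * v ^ 1 + ((1) * q22) * t ^ 1) from by funext x; ring] at hq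
    have HD := hq.add (smr221.hasDerivAt1 u v)
    exact HD.deriv.trans (by ring)
  have id2212 : pd2 (pd1 (pd2 (pd2 (h)))) = fun u v => ((1) * q13) + pd2 (pd1 (pd2 (pd2 (r)))) u v := by
    funext u v
    simp only [id221]
    have hq := hasDerivAt_quartic (((-1) * ε * σ) + ((1) * q22) * u ^ 1) (((1) * q13)) ((0:ℝ)) ((0:ℝ)) ((0:ℝ)) v
    rw [show (fun x : ℝ => (((-1) * ε * σ) + ((1) * q22) * u ^ 1) + (((1) * q13)) * x + ((0:ℝ)) * x ^ 2 + ((0:ℝ)) * x ^ 3 + ((0:ℝ)) * x ^ 4) = (fun t : ℝ => ((-1) * ε * σ) + ((1) * q13) * t ^ 1 + ((1) * q22) * u ^ 1) from by funext x; ring] at hq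
    have HD := hq.add (smr221.hasDerivAt2 u v)
    exact HD.deriv.trans (by ring)
  have V1111 : pd1 (pd1 (pd1 (pd1 (h)))) 0 0 = q40 := by
    simp only [id1111]
    rw [show pd1 (pd1 (pd1 (pd1 (r)))) 0 0 = 0 from Jet.zero (hJ.pd1.pd1.pd1.pd1)]
    norm_num
  have V1112 : pd2 (pd1 (pd1 (pd1 (h)))) 0 0 = q31 := by
    simp only [id1112]
    rw [show pd2 (pd1 (pd1 (pd1 (r)))) 0 0 = 0 from Jet.zero (hJ.pd1.pd1.pd1.pd2)]
    norm_num
  have V2211 : pd1 (pd1 (pd2 (pd2 (h)))) 0 0 = q22 := by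
    simp only [id2211]
    rw [show pd1 (pd1 (pd2 (pd2 (r)))) 0 0 = 0 from Jet.zero (hJ.pd2.pd2.pd1.pd1)]
    norm_num
  have V2212 : pd2 (pd1 (pd2 (pd2 (h)))) 0 0 = q13 := by
    simp only [id2212]
    rw [show pd2 (pd1 (pd2 (pd2 (r)))) 0 0 = 0 from Jet.zero (hJ.pd2.pd2.pd1.pd2)]
    norm_num
  -- values of DDf, D1f, D2f at the origin
  have VDD : DDf h 0 0 = ε := by unfold DDf; rw [V11, V22, V12]; ring
  have hbase : ε * DDf h 0 0 = 1 := by rw [VDD]; exact hε2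
  have hU0 : 0 < ε * DDf h 0 0 := by rw [hbase]; norm_num
  have hne : ε * DDf h 0 0 ≠ 0 := by rw [hbase]; norm_num
  have VD1 : D1f h 0 0 = 0 := by unfold D1f; rw [V111, V22, V11, V221, V12]; ring
  have VD2 : D2f h 0 0 = 0 := by unfold D2f; rw [V112, V22, V11, V222, V12]; ring
  -- smoothness / continuity of DDf
  have smDDf : Sm (DDf h) := by
    unfold Sm
    show ContDiff ℝ (⊤ : ℕ∞) fun p : ℝ × ℝ =>
      pd1 (pd1 h) p.1 p.2 * pd2 (pd2 h) p.1 p.2 - pd2 (pd1 h) p.1 p.2 ^ 2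
    exact ContDiff.sub (ContDiff.mul smh11 smh22) (ContDiff.pow smh12 2)
  have hpos_ev1 : ∀ u v : ℝ, 0 < ε * DDf h u v → ∀ᶠ t in nhds u, 0 < ε * DDf h t v := by
    intro u v hp
    have hc : Continuous fun t : ℝ => ε * DDf h t v := by
      have H := ContDiff.continuous (𝕜 := ℝ) smDDf
      exact continuous_const.mul (H.comp (continuous_id.prodMk continuous_const))
    have hm := (hc.continuousAt (x := u)).preimage_mem_nhds (Ioi_mem_nhds hp)
    filter_upwards [hm] with t ht
    exact ht
  have hpos_ev2 : ∀ u v : ℝ, 0 < ε * DDf h u v → ∀ᶠ s in nhds v, 0 < ε * DDf h u s := by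
    intro u v hp
    have hc : Continuous fun s : ℝ => ε * DDf h u s := by
      have H := ContDiff.continuous (𝕜 := ℝ) smDDf
      exact continuous_const.mul (H.comp ((continuous_const (y := u)).prodMk continuous_id))
    have hm := (hc.continuousAt (x := v)).preimage_mem_nhds (Ioi_mem_nhds hp)
    filter_upwards [hm] with t ht
    exact ht
  -- derivatives of DDf along the axes
  have hDD1 : ∀ u v : ℝ, HasDerivAt (fun t => DDf h t v) (D1f h u v) u := by
    intro u v
    have HD := ((smh11.hasDerivAt1 u v).mul (smh22.hasDerivAt1 u v)).sub
      ((smh12.hasDerivAt1 u v).pow 2)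
    exact HD.congr_deriv (by unfold D1f; push_cast; ring)
  have hDD2 : ∀ u v : ℝ, HasDerivAt (fun s => DDf h u s) (D2f h u v) v := by
    intro u v
    have HD := ((smh11.hasDerivAt2 u v).mul (smh22.hasDerivAt2 u v)).sub
      ((smh12.hasDerivAt2 u v).pow 2)
    exact HD.congr_deriv (by unfold D2f; push_cast; ring)
  -- derivatives of Phi along the axes
  have hPhi1d : ∀ u v : ℝ, 0 < ε * DDf h u v →
      HasDerivAt (fun t => Phi ε h t v) (Phi1 ε h u v) u := by
    intro u v hp
    have hout := ((hDD1 u v).const_mul ε).rpow_const (p := -(1 / 4 : ℝ)) (Or.inl (ne_of_gt hp))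
    exact hout.congr_deriv (by
      rw [show (-(1 / 4 : ℝ)) - 1 = (-(5 / 4 : ℝ)) by norm_num]
      unfold Phi1; ring)
  have hPhi2d : ∀ u v : ℝ, 0 < ε * DDf h u v →
      HasDerivAt (fun s => Phi ε h u s) (Phi2 ε h u v) v := by
    intro u v hp
    have hout := ((hDD2 u v).const_mul ε).rpow_const (p := -(1 / 4 : ℝ)) (Or.inl (ne_of_gt hp))
    exact hout.congr_deriv (by
      rw [show (-(1 / 4 : ℝ)) - 1 = (-(5 / 4 : ℝ)) by norm_num]
      unfold Phi2; ring)
  -- the first partial derivative of the conormal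
  have C1 : ∀ u v : ℝ, 0 < ε * DDf h u v → vpd1 (conormal (monge h)) u v =
      ![Phi1 ε h u v * -(pd1 h u v) + Phi ε h u v * -(pd1 (pd1 h) u v),
        Phi1 ε h u v * -(pd2 h u v) + Phi ε h u v * -(pd1 (pd2 h) u v),
        Phi1 ε h u v] := by
    intro u v hp
    have hφ := hPhi1d u v hp
    funext i
    fin_cases i
    · show pd1 (fun a b => conormal (monge h) a b 0) u v =
        Phi1 ε h u v * -(pd1 h u v) + Phi ε h u v * -(pd1 (pd1 h) u v)
      have HD := hφ.mul ((smh1.hasDerivAt1 u v).neg)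
      have hev : (fun t => conormal (monge h) t v 0) =ᶠ[nhds u]
          (fun t => Phi ε h t v * -(pd1 h t v)) := by
        filter_upwards [hpos_ev1 u v hp] with t ht
        rw [conormal_monge, show |pd1 (pd1 h) t v * pd2 (pd2 h) t v - pd2 (pd1 h) t v ^ 2|
          = ε * DDf h t v from abs_eq_sign_mul hε ht]
        simp only [Pi.smul_apply, smul_eq_mul, Matrix.cons_val_zero]
        rfl
      exact ((HD.congr_of_eventuallyEq hev).deriv)
    · show pd1 (fun a b => conormal (monge h) a b 1) u v =
        Phi1 ε h u v * -(pd2 h u v) + Phi ε h u v * -(pd1 (pd2 h) u v)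
      have HD := hφ.mul ((smh2.hasDerivAt1 u v).neg)
      have hev : (fun t => conormal (monge h) t v 1) =ᶠ[nhds u]
          (fun t => Phi ε h t v * -(pd2 h t v)) := by
        filter_upwards [hpos_ev1 u v hp] with t ht
        rw [conormal_monge, show |pd1 (pd1 h) t v * pd2 (pd2 h) t v - pd2 (pd1 h) t v ^ 2|
          = ε * DDf h t v from abs_eq_sign_mul hε ht]
        simp only [Pi.smul_apply, smul_eq_mul, Matrix.cons_val_one, Matrix.head_cons]
        rfl
      exact ((HD.congr_of_eventuallyEq hev).deriv)
    · show pd1 (fun a b => conormal (monge h) a b 2) u v = Phi1 ε h u v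
      have hev : (fun t => conormal (monge h) t v 2) =ᶠ[nhds u]
          (fun t => Phi ε h t v) := by
        filter_upwards [hpos_ev1 u v hp] with t ht
        rw [conormal_monge, show |pd1 (pd1 h) t v * pd2 (pd2 h) t v - pd2 (pd1 h) t v ^ 2|
          = ε * DDf h t v from abs_eq_sign_mul hε ht]
        simp only [Pi.smul_apply, smul_eq_mul, Matrix.cons_val_two, Matrix.tail_cons,
          Matrix.head_cons, mul_one]
        rfl
      exact ((hφ.congr_of_eventuallyEq hev).deriv)
  -- the second partial derivative of the conormal
  have C2 : ∀ u v : ℝ, 0 < ε * DDf h u v → vpd2 (conormal (monge h)) u v =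
      ![Phi2 ε h u v * -(pd1 h u v) + Phi ε h u v * -(pd2 (pd1 h) u v),
        Phi2 ε h u v * -(pd2 h u v) + Phi ε h u v * -(pd2 (pd2 h) u v),
        Phi2 ε h u v] := by
    intro u v hp
    have hφ := hPhi2d u v hp
    funext i
    fin_cases i
    · show pd2 (fun a b => conormal (monge h) a b 0) u v =
        Phi2 ε h u v * -(pd1 h u v) + Phi ε h u v * -(pd2 (pd1 h) u v)
      have HD := hφ.mul ((smh1.hasDerivAt2 u v).neg)
      have hev : (fun s => conormal (monge h) u s 0) =ᶠ[nhds v]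
          (fun s => Phi ε h u s * -(pd1 h u s)) := by
        filter_upwards [hpos_ev2 u v hp] with s hs
        rw [conormal_monge, show |pd1 (pd1 h) u s * pd2 (pd2 h) u s - pd2 (pd1 h) u s ^ 2|
          = ε * DDf h u s from abs_eq_sign_mul hε hs]
        simp only [Pi.smul_apply, smul_eq_mul, Matrix.cons_val_zero]
        rfl
      exact ((HD.congr_of_eventuallyEq hev).deriv)
    · show pd2 (fun a b => conormal (monge h) a b 1) u v =
        Phi2 ε h u v * -(pd2 h u v) + Phi ε h u v * -(pd2 (pd2 h) u v)
      have HD := hφ.mul ((smh2.hasDerivAt2 u v).neg)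
      have hev : (fun s => conormal (monge h) u s 1) =ᶠ[nhds v]
          (fun s => Phi ε h u s * -(pd2 h u s)) := by
        filter_upwards [hpos_ev2 u v hp] with s hs
        rw [conormal_monge, show |pd1 (pd1 h) u s * pd2 (pd2 h) u s - pd2 (pd1 h) u s ^ 2|
          = ε * DDf h u s from abs_eq_sign_mul hε hs]
        simp only [Pi.smul_apply, smul_eq_mul, Matrix.cons_val_one, Matrix.head_cons]
        rfl
      exact ((HD.congr_of_eventuallyEq hev).deriv)
    · show pd2 (fun a b => conormal (monge h) a b 2) u v = Phi2 ε h u v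
      have hev : (fun s => conormal (monge h) u s 2) =ᶠ[nhds v]
          (fun s => Phi ε h u s) := by
        filter_upwards [hpos_ev2 u v hp] with s hs
        rw [conormal_monge, show |pd1 (pd1 h) u s * pd2 (pd2 h) u s - pd2 (pd1 h) u s ^ 2|
          = ε * DDf h u s from abs_eq_sign_mul hε hs]
        simp only [Pi.smul_apply, smul_eq_mul, Matrix.cons_val_two, Matrix.tail_cons,
          Matrix.head_cons, mul_one]
        rfl
      exact ((hφ.congr_of_eventuallyEq hev).deriv)
  -- the first component of the affine normal
  have C3 : ∀ u v : ℝ, 0 < ε * DDf h u v → affNormal (monge h) u v 0 =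
      Phi ε h u v *
        ((Phi1 ε h u v * -(pd2 h u v) + Phi ε h u v * -(pd1 (pd2 h) u v)) * Phi2 ε h u v -
          Phi1 ε h u v * (Phi2 ε h u v * -(pd2 h u v) + Phi ε h u v * -(pd2 (pd2 h) u v))) := by
    intro u v hp
    unfold affNormal
    rw [Lcoef_monge, Mcoef_monge, Ncoef_monge,
      show |pd1 (pd1 h) u v * pd2 (pd2 h) u v - pd2 (pd1 h) u v ^ 2|
        = ε * DDf h u v from abs_eq_sign_mul hε hp,
      C1 u v hp, C2 u v hp, cross_apply]
    simp only [Pi.smul_apply, smul_eq_mul, Matrix.cons_val_zero, Matrix.cons_val_one,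
      Matrix.head_cons, Matrix.cons_val_two, Matrix.tail_cons]
    unfold Phi
    ring
  -- value facts for Phi, Phi1, Phi2 at the origin
  have VPhi : Phi ε h 0 0 = 1 := by unfold Phi; rw [hbase, Real.one_rpow]
  have VPhi1 : Phi1 ε h 0 0 = 0 := by unfold Phi1; rw [VD1]; ring
  have VPhi2 : Phi2 ε h 0 0 = 0 := by unfold Phi2; rw [VD2]; ring
  -- partial derivatives of the conormal at the origin
  have VC1 : vpd1 (conormal (monge h)) 0 0 = ![-1, 0, 0] := by
    rw [C1 0 0 hU0, VPhi1, VPhi, V1, V2, V11, V21]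
    funext i
    fin_cases i <;> norm_num
  have VC2 : vpd2 (conormal (monge h)) 0 0 = ![0, -ε, 0] := by
    rw [C2 0 0 hU0, VPhi2, VPhi, V1, V2, V12, V22]
    funext i
    fin_cases i <;> norm_num
  -- derivative facts along the u-axis at the origin
  have hD1u : HasDerivAt (fun t => D1f h t 0) (ε * q40 - 2 * ε * σ ^ 2 + q22) 0 := by
    have HD := (((smh111.hasDerivAt1 0 0).mul (smh22.hasDerivAt1 0 0)).add
      ((smh11.hasDerivAt1 0 0).mul (smh221.hasDerivAt1 0 0))).sub
      (((smh12.hasDerivAt1 0 0).const_mul 2).mul (smh121.hasDerivAt1 0 0))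
    rw [V1111, V22, V111, V221, V11, V2211, V12, V121] at HD
    exact HD.congr_deriv (by ring)
  obtain ⟨d2u, hD2u⟩ : ∃ d, HasDerivAt (fun t => D2f h t 0) d 0 :=
    ⟨_, (((smh112.hasDerivAt1 0 0).mul (smh22.hasDerivAt1 0 0)).add
      ((smh11.hasDerivAt1 0 0).mul (smh222.hasDerivAt1 0 0))).sub
      (((smh12.hasDerivAt1 0 0).const_mul 2).mul (smh122.hasDerivAt1 0 0))⟩
  have hRu := ((hDD1 0 0).const_mul ε).rpow_const (p := -(5 / 4 : ℝ)) (Or.inl hne)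
  have hφu : HasDerivAt (fun t => Phi ε h t 0) (Phi1 ε h 0 0) 0 := hPhi1d 0 0 hU0
  have hB1u : HasDerivAt (fun t => Phi1 ε h t 0)
      ((ε * D1f h 0 0) * (-(5 / 4 : ℝ)) * (ε * DDf h 0 0) ^ (-(5 / 4 : ℝ) - 1) * (-(1 / 4 : ℝ))
          * (ε * D1f h 0 0) +
        -(1 / 4 : ℝ) * (ε * DDf h 0 0) ^ (-(5 / 4 : ℝ)) *
          (ε * (ε * q40 - 2 * ε * σ ^ 2 + q22))) 0 := by
    have HD := (hRu.const_mul (-(1 / 4 : ℝ))).mul (hD1u.const_mul ε)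
    exact HD.congr_deriv (by ring)
  obtain ⟨b2u, hB2u⟩ : ∃ d, HasDerivAt (fun t => Phi2 ε h t 0) d 0 :=
    ⟨_, (hRu.const_mul (-(1 / 4 : ℝ))).mul (hD2u.const_mul ε)⟩
  have hN11u := hB1u.mul ((smh2.hasDerivAt1 0 0).neg) |>.add (hφu.mul ((smh21.hasDerivAt1 0 0).neg))
  have hN21u := hB2u.mul ((smh2.hasDerivAt1 0 0).neg) |>.add (hφu.mul ((smh22.hasDerivAt1 0 0).neg))
  have hKu := (hN11u.mul hB2u).sub (hB1u.mul hN21u)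
  have hGu := hφu.mul hKu
  have hEA1 : (fun t => affNormal (monge h) t 0 0) =ᶠ[nhds (0 : ℝ)] (fun t =>
      Phi ε h t 0 *
        ((Phi1 ε h t 0 * -(pd2 h t 0) + Phi ε h t 0 * -(pd1 (pd2 h) t 0)) * Phi2 ε h t 0 -
          Phi1 ε h t 0 * (Phi2 ε h t 0 * -(pd2 h t 0) + Phi ε h t 0 * -(pd2 (pd2 h) t 0)))) := by
    filter_upwards [hpos_ev1 0 0 hU0] with t ht
    exact C3 t 0 ht
  have hGA1 := hGu.congr_of_eventuallyEq hEA1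
  have key1 : vpd1 (affNormal (monge h)) 0 0 0 = 0 := by
    show pd1 (fun a b => affNormal (monge h) a b 0) 0 0 = 0
    have h0 := hGA1.deriv
    refine Eq.trans h0 ?_
    simp only [Pi.mul_apply, Pi.neg_apply, Pi.add_apply, Pi.sub_apply]
    rw [VPhi1, VPhi2, VPhi, VD1, V2, V21, V22, hq22]
    rcases hε with he | he <;> rw [he] <;> ring
  -- derivative facts along the v-axis at the origin
  have hD1v : HasDerivAt (fun s => D1f h 0 s) (ε * q31 + q13) 0 := by
    have HD := (((smh111.hasDerivAt2 0 0).mul (smh22.hasDerivAt2 0 0)).add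
      ((smh11.hasDerivAt2 0 0).mul (smh221.hasDerivAt2 0 0))).sub
      (((smh12.hasDerivAt2 0 0).const_mul 2).mul (smh121.hasDerivAt2 0 0))
    rw [V1112, V22, V111, V222, V11, V2212, V112, V221, V12, V121, V122] at HD
    exact HD.congr_deriv (by ring)
  obtain ⟨d2v, hD2v⟩ : ∃ d, HasDerivAt (fun s => D2f h 0 s) d 0 :=
    ⟨_, (((smh112.hasDerivAt2 0 0).mul (smh22.hasDerivAt2 0 0)).add
      ((smh11.hasDerivAt2 0 0).mul (smh222.hasDerivAt2 0 0))).sub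
      (((smh12.hasDerivAt2 0 0).const_mul 2).mul (smh122.hasDerivAt2 0 0))⟩
  have hRv := ((hDD2 0 0).const_mul ε).rpow_const (p := -(5 / 4 : ℝ)) (Or.inl hne)
  have hφv : HasDerivAt (fun s => Phi ε h 0 s) (Phi2 ε h 0 0) 0 := hPhi2d 0 0 hU0
  have hB1v : HasDerivAt (fun s => Phi1 ε h 0 s)
      ((ε * D2f h 0 0) * (-(5 / 4 : ℝ)) * (ε * DDf h 0 0) ^ (-(5 / 4 : ℝ) - 1) * (-(1 / 4 : ℝ))
          * (ε * D1f h 0 0) +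
        -(1 / 4 : ℝ) * (ε * DDf h 0 0) ^ (-(5 / 4 : ℝ)) * (ε * (ε * q31 + q13))) 0 := by
    have HD := (hRv.const_mul (-(1 / 4 : ℝ))).mul (hD1v.const_mul ε)
    exact HD.congr_deriv (by ring)
  obtain ⟨b2v, hB2v⟩ : ∃ d, HasDerivAt (fun s => Phi2 ε h 0 s) d 0 :=
    ⟨_, (hRv.const_mul (-(1 / 4 : ℝ))).mul (hD2v.const_mul ε)⟩
  have hN11v := hB1v.mul ((smh2.hasDerivAt2 0 0).neg) |>.add (hφv.mul ((smh21.hasDerivAt2 0 0).neg))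
  have hN21v := hB2v.mul ((smh2.hasDerivAt2 0 0).neg) |>.add (hφv.mul ((smh22.hasDerivAt2 0 0).neg))
  have hKv := (hN11v.mul hB2v).sub (hB1v.mul hN21v)
  have hGv := hφv.mul hKv
  have hEA2 : (fun s => affNormal (monge h) 0 s 0) =ᶠ[nhds (0 : ℝ)] (fun s =>
      Phi ε h 0 s *
        ((Phi1 ε h 0 s * -(pd2 h 0 s) + Phi ε h 0 s * -(pd1 (pd2 h) 0 s)) * Phi2 ε h 0 s -
          Phi1 ε h 0 s * (Phi2 ε h 0 s * -(pd2 h 0 s) + Phi ε h 0 s * -(pd2 (pd2 h) 0 s)))) := by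
    filter_upwards [hpos_ev2 0 0 hU0] with s hs
    exact C3 0 s hs
  have hGA2 := hGv.congr_of_eventuallyEq hEA2
  have key2 : vpd2 (affNormal (monge h)) 0 0 0 = 0 := by
    show pd2 (fun a b => affNormal (monge h) a b 0) 0 0 = 0
    have h0 := hGA2.deriv
    refine Eq.trans h0 ?_
    simp only [Pi.mul_apply, Pi.neg_apply, Pi.add_apply, Pi.sub_apply]
    rw [VPhi1, VPhi2, VPhi, VD1, V2, V21, V22, hq31]
    rcases hε with he | he <;> rw [he] <;> ring
  -- final assembly
  have hl : lA (monge h) 0 0 = 0 := by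
    unfold lA
    rw [VC1]
    have hd : (![(-1 : ℝ), 0, 0] ⬝ᵥ vpd1 (affNormal (monge h)) 0 0) =
        -(vpd1 (affNormal (monge h)) 0 0 0) := by
      simp [dotProduct, Fin.sum_univ_three]
    rw [hd, key1, neg_zero]
  have hm : mA (monge h) 0 0 = 0 := by
    unfold mA
    rw [VC1]
    have hd : (![(-1 : ℝ), 0, 0] ⬝ᵥ vpd2 (affNormal (monge h)) 0 0) =
        -(vpd2 (affNormal (monge h)) 0 0 0) := by
      simp [dotProduct, Fin.sum_univ_three]
    rw [hd, key2, neg_zero]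
  refine ⟨hl, hm, by rw [hl, hm]; ring, ?_⟩
  intro hn a b _
  rw [hl, hm]
  constructor
  · intro heq
    have hb2 : nA (monge h) 0 0 * b ^ 2 = 0 := by linear_combination heq
    rcases mul_eq_zero.mp hb2 with h' | h'
    · exact absurd h' hn
    · exact (pow_eq_zero_iff two_ne_zero).mp h'
  · intro hb
    rw [hb]
    ring

end
end

section
/- Let p be a non-parabolic point of a surface in Pick normal form with parameters ε, σ, q_ij. Then p = α(0,0) is a flat affine umbilic point (simultaneously affine umbilic and affine parabolic) if and only if q₃₁ = −εq₁₃, q₄₀ = q₀₄, and q₂₂ = −ε(−2σ² + q₄₀); equivalently, under these conditions l(0,0) = m(0,0) = n(0,0) = 0. -/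
noncomputable section

open Matrix

/-! ### Auxiliary directional-derivative machinery -/

def e1 : ℝ × ℝ := (1, 0)
def e2 : ℝ × ℝ := (0, 1)

/-- Directional derivative. -/
def Dv (w : ℝ × ℝ) (F : ℝ × ℝ → ℝ) : ℝ × ℝ → ℝ := fun p => fderiv ℝ F p w

theorem ContDiff.dv {F : ℝ × ℝ → ℝ} (hF : ContDiff ℝ (⊤ : ℕ∞) F) (w : ℝ × ℝ) :
    ContDiff ℝ (⊤ : ℕ∞) (Dv w F) :=
  (hF.fderiv_right (by simp)).clm_apply contDiff_const

theorem Dv_add {F G : ℝ × ℝ → ℝ} {p : ℝ × ℝ} (w : ℝ × ℝ)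
    (hF : DifferentiableAt ℝ F p) (hG : DifferentiableAt ℝ G p) :
    Dv w (fun q => F q + G q) p = Dv w F p + Dv w G p := by
  simp [Dv, fderiv_fun_add hF hG]

theorem Dv_mul {F G : ℝ × ℝ → ℝ} {p : ℝ × ℝ} (w : ℝ × ℝ)
    (hF : DifferentiableAt ℝ F p) (hG : DifferentiableAt ℝ G p) :
    Dv w (fun q => F q * G q) p = Dv w F p * G p + F p * Dv w G p := by
  simp [Dv, fderiv_fun_mul hF hG]; ring

theorem Dv_neg {F : ℝ × ℝ → ℝ} {p : ℝ × ℝ} (w : ℝ × ℝ) :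
    Dv w (fun q => -F q) p = -Dv w F p := by
  simp [Dv, fderiv_neg]

theorem Dv_sub {F G : ℝ × ℝ → ℝ} {p : ℝ × ℝ} (w : ℝ × ℝ)
    (hF : DifferentiableAt ℝ F p) (hG : DifferentiableAt ℝ G p) :
    Dv w (fun q => F q - G q) p = Dv w F p - Dv w G p := by
  simp [Dv, fderiv_fun_sub hF hG]

theorem Dv_const (c : ℝ) (w : ℝ × ℝ) (p : ℝ × ℝ) : Dv w (fun _ => c) p = 0 := by
  simp [Dv]

theorem pd1_eq {F : ℝ × ℝ → ℝ} {f : ℝ → ℝ → ℝ} {U : Set (ℝ × ℝ)} (hU : IsOpen U)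
    {u v : ℝ} (hp : (u, v) ∈ U) (heq : ∀ q ∈ U, f q.1 q.2 = F q)
    (hF : DifferentiableAt ℝ F (u, v)) :
    pd1 f u v = Dv e1 F (u, v) := by
  have hline : HasDerivAt (fun t : ℝ => (t, v)) ((1 : ℝ), (0 : ℝ)) u :=
    (hasDerivAt_id u).prodMk (hasDerivAt_const u v)
  have hcomp : HasDerivAt (fun t => F (t, v)) (fderiv ℝ F (u, v) (1, 0)) u := by
    exact (hF.hasFDerivAt.comp_hasDerivAt u hline)
  have hev : (fun t => f t v) =ᶠ[nhds u] (fun t => F (t, v)) := by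
    have hcont : ContinuousAt (fun t : ℝ => (t, v)) u := by fun_prop
    filter_upwards [hcont.preimage_mem_nhds (hU.mem_nhds hp)] with t ht
    exact heq (t, v) ht
  rw [pd1, hev.deriv_eq, hcomp.deriv]; rfl

theorem pd2_eq {F : ℝ × ℝ → ℝ} {f : ℝ → ℝ → ℝ} {U : Set (ℝ × ℝ)} (hU : IsOpen U)
    {u v : ℝ} (hp : (u, v) ∈ U) (heq : ∀ q ∈ U, f q.1 q.2 = F q)
    (hF : DifferentiableAt ℝ F (u, v)) :
    pd2 f u v = Dv e2 F (u, v) := by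
  have hline : HasDerivAt (fun t : ℝ => (u, t)) ((0 : ℝ), (1 : ℝ)) v :=
    (hasDerivAt_const v u).prodMk (hasDerivAt_id v)
  have hcomp : HasDerivAt (fun t => F (u, t)) (fderiv ℝ F (u, v) (0, 1)) v := by
    exact (hF.hasFDerivAt.comp_hasDerivAt v hline)
  have hev : (fun t => f u t) =ᶠ[nhds v] (fun t => F (u, t)) := by
    have hcont : ContinuousAt (fun t : ℝ => (u, t)) v := by fun_prop
    filter_upwards [hcont.preimage_mem_nhds (hU.mem_nhds hp)] with t ht
    exact heq (u, t) ht
  rw [pd2, hev.deriv_eq, hcomp.deriv]; rfl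

theorem pd1_eq' {F : ℝ × ℝ → ℝ} {f : ℝ → ℝ → ℝ} {u v : ℝ}
    (heq : ∀ a b, f a b = F (a, b)) (hF : DifferentiableAt ℝ F (u, v)) :
    pd1 f u v = Dv e1 F (u, v) :=
  pd1_eq isOpen_univ (Set.mem_univ _) (fun q _ => heq q.1 q.2) hF

theorem pd2_eq' {F : ℝ × ℝ → ℝ} {f : ℝ → ℝ → ℝ} {u v : ℝ}
    (heq : ∀ a b, f a b = F (a, b)) (hF : DifferentiableAt ℝ F (u, v)) :
    pd2 f u v = Dv e2 F (u, v) :=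
  pd2_eq isOpen_univ (Set.mem_univ _) (fun q _ => heq q.1 q.2) hF

theorem pd1_const (c u v : ℝ) : pd1 (fun _ _ => c) u v = 0 := by simp [pd1]
theorem pd2_const (c u v : ℝ) : pd2 (fun _ _ => c) u v = 0 := by simp [pd2]
theorem pd1_fst (u v : ℝ) : pd1 (fun a _ => a) u v = 1 := by simp [pd1]
theorem pd2_fst (u v : ℝ) : pd2 (fun a _ => a) u v = 0 := by simp [pd2]
theorem pd1_snd (u v : ℝ) : pd1 (fun _ b => b) u v = 0 := by simp [pd1]
theorem pd2_snd (u v : ℝ) : pd2 (fun _ b => b) u v = 1 := by simp [pd2]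

/-! ### The basic functions -/

def gF (H : ℝ × ℝ → ℝ) : ℝ × ℝ → ℝ := fun p =>
  Dv e1 (Dv e1 H) p * Dv e2 (Dv e2 H) p - Dv e2 (Dv e1 H) p * Dv e2 (Dv e1 H) p

def fF (ε : ℝ) (H : ℝ × ℝ → ℝ) : ℝ × ℝ → ℝ := fun p => (ε * gF H p) ^ (-(1 / 4) : ℝ)

def cF (ε : ℝ) (H : ℝ × ℝ → ℝ) : ℝ × ℝ → ℝ := fun p =>
  (-(1 / 4) * (ε * gF H p) ^ (-(5 / 4) : ℝ)) * ε

def UU (ε : ℝ) (H : ℝ × ℝ → ℝ) : Set (ℝ × ℝ) := {p | 0 < ε * gF H p}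

def nu0F (ε : ℝ) (H : ℝ × ℝ → ℝ) : ℝ × ℝ → ℝ := fun p =>
  cF ε H p * Dv e1 (gF H) p * (-Dv e1 H p) + fF ε H p * (-Dv e1 (Dv e1 H) p)
def nu1F (ε : ℝ) (H : ℝ × ℝ → ℝ) : ℝ × ℝ → ℝ := fun p =>
  cF ε H p * Dv e1 (gF H) p * (-Dv e2 H p) + fF ε H p * (-Dv e1 (Dv e2 H) p)
def nu2F (ε : ℝ) (H : ℝ × ℝ → ℝ) : ℝ × ℝ → ℝ := fun p =>
  cF ε H p * Dv e1 (gF H) p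
def nv0F (ε : ℝ) (H : ℝ × ℝ → ℝ) : ℝ × ℝ → ℝ := fun p =>
  cF ε H p * Dv e2 (gF H) p * (-Dv e1 H p) + fF ε H p * (-Dv e2 (Dv e1 H) p)
def nv1F (ε : ℝ) (H : ℝ × ℝ → ℝ) : ℝ × ℝ → ℝ := fun p =>
  cF ε H p * Dv e2 (gF H) p * (-Dv e2 H p) + fF ε H p * (-Dv e2 (Dv e2 H) p)
def nv2F (ε : ℝ) (H : ℝ × ℝ → ℝ) : ℝ × ℝ → ℝ := fun p =>
  cF ε H p * Dv e2 (gF H) p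

def X0F (ε : ℝ) (H : ℝ × ℝ → ℝ) : ℝ × ℝ → ℝ := fun p =>
  nu1F ε H p * nv2F ε H p - nu2F ε H p * nv1F ε H p
def X1F (ε : ℝ) (H : ℝ × ℝ → ℝ) : ℝ × ℝ → ℝ := fun p =>
  nu2F ε H p * nv0F ε H p - nu0F ε H p * nv2F ε H p
def X2F (ε : ℝ) (H : ℝ × ℝ → ℝ) : ℝ × ℝ → ℝ := fun p =>
  nu0F ε H p * nv1F ε H p - nu1F ε H p * nv0F ε H p

section facts
variable {ε : ℝ} {H : ℝ × ℝ → ℝ}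

theorem gF_contDiff (hH : ContDiff ℝ (⊤ : ℕ∞) H) : ContDiff ℝ (⊤ : ℕ∞) (gF H) :=
  (((hH.dv e1).dv e1).mul ((hH.dv e2).dv e2)).sub
    (((hH.dv e1).dv e2).mul ((hH.dv e1).dv e2))

theorem UU_open (hH : ContDiff ℝ (⊤ : ℕ∞) H) : IsOpen (UU ε H) :=
  isOpen_lt continuous_const (continuous_const.mul (gF_contDiff hH).continuous)

theorem fF_hasFDerivAt (hH : ContDiff ℝ (⊤ : ℕ∞) H) {p : ℝ × ℝ} (hp : p ∈ UU ε H) :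
    HasFDerivAt (fF ε H) (cF ε H p • fderiv ℝ (gF H) p) p := by
  have hgd : DifferentiableAt ℝ (gF H) p := ((gF_contDiff hH).differentiable (by simp)) p
  have hgp : HasFDerivAt (fun q => ε * gF H q) (ε • fderiv ℝ (gF H) p) p :=
    hgd.hasFDerivAt.const_mul ε
  have hrp : HasDerivAt (fun x : ℝ => x ^ (-(1 / 4) : ℝ))
      (-(1 / 4) * (ε * gF H p) ^ ((-(1 / 4)) - 1 : ℝ)) (ε * gF H p) :=
    Real.hasDerivAt_rpow_const (Or.inl (ne_of_gt hp))
  have hc := hrp.comp_hasFDerivAt p hgp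
  have : (-(1 / 4) * (ε * gF H p) ^ ((-(1 / 4)) - 1 : ℝ)) • (ε • fderiv ℝ (gF H) p)
      = cF ε H p • fderiv ℝ (gF H) p := by
    rw [smul_smul, cF]
    norm_num
  rwa [this] at hc

theorem fF_diffAt (hH : ContDiff ℝ (⊤ : ℕ∞) H) {p : ℝ × ℝ} (hp : p ∈ UU ε H) : DifferentiableAt ℝ (fF ε H) p :=
  (fF_hasFDerivAt hH hp).differentiableAt

theorem Dv_fF (hH : ContDiff ℝ (⊤ : ℕ∞) H) {p : ℝ × ℝ} (hp : p ∈ UU ε H) (w : ℝ × ℝ) :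
    Dv w (fF ε H) p = cF ε H p * Dv w (gF H) p := by
  rw [Dv, (fF_hasFDerivAt hH hp).fderiv]
  simp [Dv]

theorem cF_diffAt (hH : ContDiff ℝ (⊤ : ℕ∞) H) {p : ℝ × ℝ} (hp : p ∈ UU ε H) : DifferentiableAt ℝ (cF ε H) p := by
  have hgd : DifferentiableAt ℝ (gF H) p := ((gF_contDiff hH).differentiable (by simp)) p
  have hgp : HasFDerivAt (fun q => ε * gF H q) (ε • fderiv ℝ (gF H) p) p :=
    hgd.hasFDerivAt.const_mul ε
  have hrp : HasDerivAt (fun x : ℝ => x ^ (-(5 / 4) : ℝ))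
      (-(5 / 4) * (ε * gF H p) ^ ((-(5 / 4)) - 1 : ℝ)) (ε * gF H p) :=
    Real.hasDerivAt_rpow_const (Or.inl (ne_of_gt hp))
  have h1 : DifferentiableAt ℝ (fun q => (ε * gF H q) ^ (-(5 / 4) : ℝ)) p := by
    have := (hrp.comp_hasFDerivAt p hgp).differentiableAt; exact this
  exact (h1.const_mul _).mul_const ε

end facts

/-! ### Monomials and polynomial derivatives -/

@[fun_prop]
theorem mono_diff (c : ℝ) (i j : ℕ) :
    Differentiable ℝ (fun p : ℝ × ℝ => c * (p.1 ^ i * p.2 ^ j)) := by fun_prop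

theorem Dv_mono (c : ℝ) (i j : ℕ) (w p) :
    Dv w (fun p : ℝ × ℝ => c * (p.1 ^ i * p.2 ^ j)) p =
      c * ((i * p.1 ^ (i - 1) * w.1) * p.2 ^ j + p.1 ^ i * (j * p.2 ^ (j - 1) * w.2)) := by
  have hx : HasFDerivAt (fun p : ℝ × ℝ => p.1 ^ i)
      ((i * p.1 ^ (i - 1) : ℝ) • ContinuousLinearMap.fst ℝ ℝ ℝ) p :=
    (hasDerivAt_pow i p.1).comp_hasFDerivAt p (hasFDerivAt_fst)
  have hy : HasFDerivAt (fun p : ℝ × ℝ => p.2 ^ j)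
      ((j * p.2 ^ (j - 1) : ℝ) • ContinuousLinearMap.snd ℝ ℝ ℝ) p :=
    (hasDerivAt_pow j p.2).comp_hasFDerivAt p (hasFDerivAt_snd)
  have h := ((hx.fun_mul hy).const_mul c).fderiv
  simp only [Dv, h]
  simp [ContinuousLinearMap.smul_apply]
  ring

/-- Derivative of a general 2-variable polynomial of degree ≤ 4. -/
theorem Dv_P15 (a00 a10 a01 a20 a11 a02 a30 a21 a12 a03 a40 a31 a22 a13 a04 : ℝ) (w : ℝ × ℝ) :
    Dv w (fun p : ℝ × ℝ =>
      a00 * (p.1 ^ 0 * p.2 ^ 0) + (a10 * (p.1 ^ 1 * p.2 ^ 0) + (a01 * (p.1 ^ 0 * p.2 ^ 1) +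
      (a20 * (p.1 ^ 2 * p.2 ^ 0) + (a11 * (p.1 ^ 1 * p.2 ^ 1) + (a02 * (p.1 ^ 0 * p.2 ^ 2) +
      (a30 * (p.1 ^ 3 * p.2 ^ 0) + (a21 * (p.1 ^ 2 * p.2 ^ 1) + (a12 * (p.1 ^ 1 * p.2 ^ 2) +
      (a03 * (p.1 ^ 0 * p.2 ^ 3) + (a40 * (p.1 ^ 4 * p.2 ^ 0) + (a31 * (p.1 ^ 3 * p.2 ^ 1) +
      (a22 * (p.1 ^ 2 * p.2 ^ 2) + (a13 * (p.1 ^ 1 * p.2 ^ 3) + a04 * (p.1 ^ 0 * p.2 ^ 4)))))))))))))))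
    = fun p =>
      (a10 + 2*a20*p.1 + a11*p.2 + 3*a30*p.1^2 + 2*a21*p.1*p.2 + a12*p.2^2
        + 4*a40*p.1^3 + 3*a31*p.1^2*p.2 + 2*a22*p.1*p.2^2 + a13*p.2^3) * w.1 +
      (a01 + a11*p.1 + 2*a02*p.2 + a21*p.1^2 + 2*a12*p.1*p.2 + 3*a03*p.2^2
        + a31*p.1^3 + 2*a22*p.1^2*p.2 + 3*a13*p.1*p.2^2 + 4*a04*p.2^3) * w.2 := by
  funext p
  rw [Dv_add w (by fun_prop) (by fun_prop), Dv_add w (by fun_prop) (by fun_prop),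
      Dv_add w (by fun_prop) (by fun_prop), Dv_add w (by fun_prop) (by fun_prop),
      Dv_add w (by fun_prop) (by fun_prop), Dv_add w (by fun_prop) (by fun_prop),
      Dv_add w (by fun_prop) (by fun_prop), Dv_add w (by fun_prop) (by fun_prop),
      Dv_add w (by fun_prop) (by fun_prop), Dv_add w (by fun_prop) (by fun_prop),
      Dv_add w (by fun_prop) (by fun_prop), Dv_add w (by fun_prop) (by fun_prop),
      Dv_add w (by fun_prop) (by fun_prop), Dv_add w (by fun_prop) (by fun_prop)]
  simp only [Dv_mono]
  push_cast
  ring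


theorem Dv_P15_e1 (a00 a10 a01 a20 a11 a02 a30 a21 a12 a03 a40 a31 a22 a13 a04 : ℝ) :
    Dv e1 (fun p : ℝ × ℝ =>
      a00 * (p.1 ^ 0 * p.2 ^ 0) + (a10 * (p.1 ^ 1 * p.2 ^ 0) + (a01 * (p.1 ^ 0 * p.2 ^ 1) +
      (a20 * (p.1 ^ 2 * p.2 ^ 0) + (a11 * (p.1 ^ 1 * p.2 ^ 1) + (a02 * (p.1 ^ 0 * p.2 ^ 2) +
      (a30 * (p.1 ^ 3 * p.2 ^ 0) + (a21 * (p.1 ^ 2 * p.2 ^ 1) + (a12 * (p.1 ^ 1 * p.2 ^ 2) +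
      (a03 * (p.1 ^ 0 * p.2 ^ 3) + (a40 * (p.1 ^ 4 * p.2 ^ 0) + (a31 * (p.1 ^ 3 * p.2 ^ 1) +
      (a22 * (p.1 ^ 2 * p.2 ^ 2) + (a13 * (p.1 ^ 1 * p.2 ^ 3) + a04 * (p.1 ^ 0 * p.2 ^ 4)))))))))))))))
    = fun p =>
      a10 + 2*a20*p.1 + a11*p.2 + 3*a30*p.1^2 + 2*a21*p.1*p.2 + a12*p.2^2
        + 4*a40*p.1^3 + 3*a31*p.1^2*p.2 + 2*a22*p.1*p.2^2 + a13*p.2^3 := by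
  rw [Dv_P15]
  funext p
  norm_num [e1]

theorem Dv_P15_e2 (a00 a10 a01 a20 a11 a02 a30 a21 a12 a03 a40 a31 a22 a13 a04 : ℝ) :
    Dv e2 (fun p : ℝ × ℝ =>
      a00 * (p.1 ^ 0 * p.2 ^ 0) + (a10 * (p.1 ^ 1 * p.2 ^ 0) + (a01 * (p.1 ^ 0 * p.2 ^ 1) +
      (a20 * (p.1 ^ 2 * p.2 ^ 0) + (a11 * (p.1 ^ 1 * p.2 ^ 1) + (a02 * (p.1 ^ 0 * p.2 ^ 2) +
      (a30 * (p.1 ^ 3 * p.2 ^ 0) + (a21 * (p.1 ^ 2 * p.2 ^ 1) + (a12 * (p.1 ^ 1 * p.2 ^ 2) +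
      (a03 * (p.1 ^ 0 * p.2 ^ 3) + (a40 * (p.1 ^ 4 * p.2 ^ 0) + (a31 * (p.1 ^ 3 * p.2 ^ 1) +
      (a22 * (p.1 ^ 2 * p.2 ^ 2) + (a13 * (p.1 ^ 1 * p.2 ^ 3) + a04 * (p.1 ^ 0 * p.2 ^ 4)))))))))))))))
    = fun p =>
      a01 + a11*p.1 + 2*a02*p.2 + a21*p.1^2 + 2*a12*p.1*p.2 + 3*a03*p.2^2
        + a31*p.1^3 + 2*a22*p.1^2*p.2 + 3*a13*p.1*p.2^2 + 4*a04*p.2^3 := by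
  rw [Dv_P15]
  funext p
  norm_num [e2]

/-! ### Jet vanishing -/

theorem jet_dv {F : ℝ × ℝ → ℝ} (hF : ContDiff ℝ (⊤ : ℕ∞) F) (w : ℝ × ℝ) (x : ℝ × ℝ) (m : ℕ)
    (hjet : ∀ k : ℕ, k ≤ m + 1 → iteratedFDeriv ℝ k F x = 0) :
    ∀ k : ℕ, k ≤ m → iteratedFDeriv ℝ k (Dv w F) x = 0 := by
  intro k hk
  ext v
  have hc : ContDiff ℝ (⊤ : ℕ∞) (fderiv ℝ F) := hF.fderiv_right (by simp)
  have h1 : iteratedFDeriv ℝ k (Dv w F) x v = (iteratedFDeriv ℝ k (fderiv ℝ F) x v) w :=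
    iteratedFDeriv_clm_apply_const_apply hc (by exact_mod_cast le_top)
  have h2 : (iteratedFDeriv ℝ k (fderiv ℝ F) x v) w
      = iteratedFDeriv ℝ (k + 1) F x (Fin.snoc v w) := by
    rw [iteratedFDeriv_succ_apply_right]
    simp [Fin.init_snoc, Fin.snoc_last]
  rw [h1, h2, hjet (k + 1) (by omega)]
  simp

theorem jet_dv_zero {F : ℝ × ℝ → ℝ} (hF : ContDiff ℝ (⊤ : ℕ∞) F) (w : ℝ × ℝ) (x : ℝ × ℝ) (m : ℕ)
    (hjet : ∀ k : ℕ, k ≤ m + 1 → iteratedFDeriv ℝ k F x = 0) : Dv w F x = 0 := by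
  have h0 := jet_dv hF w x m hjet 0 (Nat.zero_le _)
  have : iteratedFDeriv ℝ 0 (Dv w F) x (fun _ => 0) = 0 := by rw [h0]; simp
  rwa [iteratedFDeriv_zero_apply] at this

section chart
variable {ε : ℝ} {H : ℝ × ℝ → ℝ} {h : ℝ → ℝ → ℝ}

theorem monge_vpd1 (hH : ContDiff ℝ (⊤ : ℕ∞) H) (hh : ∀ u v, h u v = H (u, v)) (u v : ℝ) :
    vpd1 (monge h) u v = ![1, 0, Dv e1 H (u, v)] := by
  funext i
  fin_cases i
  · show pd1 (fun a b => monge h a b 0) u v = _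
    simp only [monge, Matrix.cons_val_zero]
    simp [pd1_fst]
  · show pd1 (fun a b => monge h a b 1) u v = _
    simp only [monge, Matrix.cons_val_one, Matrix.head_cons]
    simp [pd1_snd]
  · show pd1 (fun a b => monge h a b 2) u v = _
    simp only [monge]
    have : (fun a b => (![a, b, h a b] : Fin 3 → ℝ) 2) = fun a b => h a b := by
      funext a b; simp
    rw [this, pd1_eq' hh ((hH.differentiable (by simp)) _)]
    simp

theorem monge_vpd2 (hH : ContDiff ℝ (⊤ : ℕ∞) H) (hh : ∀ u v, h u v = H (u, v)) (u v : ℝ) :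
    vpd2 (monge h) u v = ![0, 1, Dv e2 H (u, v)] := by
  funext i
  fin_cases i
  · show pd2 (fun a b => monge h a b 0) u v = _
    simp only [monge, Matrix.cons_val_zero]
    simp [pd2_fst]
  · show pd2 (fun a b => monge h a b 1) u v = _
    simp only [monge, Matrix.cons_val_one, Matrix.head_cons]
    simp [pd2_snd]
  · show pd2 (fun a b => monge h a b 2) u v = _
    simp only [monge]
    have : (fun a b => (![a, b, h a b] : Fin 3 → ℝ) 2) = fun a b => h a b := by
      funext a b; simp
    rw [this, pd2_eq' hh ((hH.differentiable (by simp)) _)]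
    simp

theorem monge_vpd11 (hH : ContDiff ℝ (⊤ : ℕ∞) H) (hh : ∀ u v, h u v = H (u, v)) (u v : ℝ) :
    vpd1 (vpd1 (monge h)) u v = ![0, 0, Dv e1 (Dv e1 H) (u, v)] := by
  have hv : vpd1 (monge h) = fun a b => ![1, 0, Dv e1 H (a, b)] := by
    funext a b; exact monge_vpd1 hH hh a b
  rw [hv]
  funext i
  fin_cases i
  · show pd1 (fun a b => (![1, 0, Dv e1 H (a, b)] : Fin 3 → ℝ) 0) u v = _
    simp [pd1_const]
  · show pd1 (fun a b => (![1, 0, Dv e1 H (a, b)] : Fin 3 → ℝ) 1) u v = _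
    simp [pd1_const]
  · show pd1 (fun a b => (![1, 0, Dv e1 H (a, b)] : Fin 3 → ℝ) 2) u v = _
    have : (fun a b => (![1, 0, Dv e1 H (a, b)] : Fin 3 → ℝ) 2)
        = fun a b => Dv e1 H (a, b) := by funext a b; simp
    rw [this, pd1_eq' (fun a b => rfl) (((hH.dv e1).differentiable (by simp)) _)]
    simp

theorem monge_vpd21 (hH : ContDiff ℝ (⊤ : ℕ∞) H) (hh : ∀ u v, h u v = H (u, v)) (u v : ℝ) :
    vpd2 (vpd1 (monge h)) u v = ![0, 0, Dv e2 (Dv e1 H) (u, v)] := by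
  have hv : vpd1 (monge h) = fun a b => ![1, 0, Dv e1 H (a, b)] := by
    funext a b; exact monge_vpd1 hH hh a b
  rw [hv]
  funext i
  fin_cases i
  · show pd2 (fun a b => (![1, 0, Dv e1 H (a, b)] : Fin 3 → ℝ) 0) u v = _
    simp [pd2_const]
  · show pd2 (fun a b => (![1, 0, Dv e1 H (a, b)] : Fin 3 → ℝ) 1) u v = _
    simp [pd2_const]
  · show pd2 (fun a b => (![1, 0, Dv e1 H (a, b)] : Fin 3 → ℝ) 2) u v = _
    have : (fun a b => (![1, 0, Dv e1 H (a, b)] : Fin 3 → ℝ) 2)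
        = fun a b => Dv e1 H (a, b) := by funext a b; simp
    rw [this, pd2_eq' (fun a b => rfl) (((hH.dv e1).differentiable (by simp)) _)]
    simp

theorem monge_vpd22 (hH : ContDiff ℝ (⊤ : ℕ∞) H) (hh : ∀ u v, h u v = H (u, v)) (u v : ℝ) :
    vpd2 (vpd2 (monge h)) u v = ![0, 0, Dv e2 (Dv e2 H) (u, v)] := by
  have hv : vpd2 (monge h) = fun a b => ![0, 1, Dv e2 H (a, b)] := by
    funext a b; exact monge_vpd2 hH hh a b
  rw [hv]
  funext i
  fin_cases i
  · show pd2 (fun a b => (![0, 1, Dv e2 H (a, b)] : Fin 3 → ℝ) 0) u v = _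
    simp [pd2_const]
  · show pd2 (fun a b => (![0, 1, Dv e2 H (a, b)] : Fin 3 → ℝ) 1) u v = _
    simp [pd2_const]
  · show pd2 (fun a b => (![0, 1, Dv e2 H (a, b)] : Fin 3 → ℝ) 2) u v = _
    have : (fun a b => (![0, 1, Dv e2 H (a, b)] : Fin 3 → ℝ) 2)
        = fun a b => Dv e2 H (a, b) := by funext a b; simp
    rw [this, pd2_eq' (fun a b => rfl) (((hH.dv e2).differentiable (by simp)) _)]
    simp

theorem Lcoef_eq (hH : ContDiff ℝ (⊤ : ℕ∞) H) (hh : ∀ u v, h u v = H (u, v)) (u v : ℝ) :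
    Lcoef (monge h) u v = Dv e1 (Dv e1 H) (u, v) := by
  rw [Lcoef, monge_vpd1 hH hh, monge_vpd2 hH hh, monge_vpd11 hH hh, detV,
    Matrix.det_fin_three]
  simp only [Matrix.of_apply, Matrix.cons_val', Matrix.cons_val_zero, Matrix.cons_val_one,
    Matrix.head_cons, Matrix.empty_val', Matrix.cons_val_fin_one, Matrix.head_fin_const,
    Matrix.cons_val_two, Matrix.tail_cons]
  ring

theorem Mcoef_eq (hH : ContDiff ℝ (⊤ : ℕ∞) H) (hh : ∀ u v, h u v = H (u, v)) (u v : ℝ) :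
    Mcoef (monge h) u v = Dv e2 (Dv e1 H) (u, v) := by
  rw [Mcoef, monge_vpd1 hH hh, monge_vpd2 hH hh, monge_vpd21 hH hh, detV,
    Matrix.det_fin_three]
  simp only [Matrix.of_apply, Matrix.cons_val', Matrix.cons_val_zero, Matrix.cons_val_one,
    Matrix.head_cons, Matrix.empty_val', Matrix.cons_val_fin_one, Matrix.head_fin_const,
    Matrix.cons_val_two, Matrix.tail_cons]
  ring

theorem Ncoef_eq (hH : ContDiff ℝ (⊤ : ℕ∞) H) (hh : ∀ u v, h u v = H (u, v)) (u v : ℝ) :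
    Ncoef (monge h) u v = Dv e2 (Dv e2 H) (u, v) := by
  rw [Ncoef, monge_vpd1 hH hh, monge_vpd2 hH hh, monge_vpd22 hH hh, detV,
    Matrix.det_fin_three]
  simp only [Matrix.of_apply, Matrix.cons_val', Matrix.cons_val_zero, Matrix.cons_val_one,
    Matrix.head_cons, Matrix.empty_val', Matrix.cons_val_fin_one, Matrix.head_fin_const,
    Matrix.cons_val_two, Matrix.tail_cons]
  ring

theorem abs_eq_g (hε : ε = 1 ∨ ε = -1) (hH : ContDiff ℝ (⊤ : ℕ∞) H) (hh : ∀ u v, h u v = H (u, v))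
    (u v : ℝ) (hp : (u, v) ∈ UU ε H) :
    |Lcoef (monge h) u v * Ncoef (monge h) u v - Mcoef (monge h) u v ^ 2|
      = ε * gF H (u, v) := by
  rw [Lcoef_eq hH hh, Mcoef_eq hH hh, Ncoef_eq hH hh]
  have hid : Dv e1 (Dv e1 H) (u, v) * Dv e2 (Dv e2 H) (u, v) - Dv e2 (Dv e1 H) (u, v) ^ 2
      = gF H (u, v) := by rw [gF]; ring
  rw [hid]
  have hpos : 0 < ε * gF H (u, v) := hp
  rcases hε with he | he
  · rw [he] at hpos ⊢
    rw [abs_of_pos (by linarith)]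
    ring
  · rw [he] at hpos ⊢
    rw [abs_of_neg (by linarith)]
    ring

theorem conormal_eq (hε : ε = 1 ∨ ε = -1) (hH : ContDiff ℝ (⊤ : ℕ∞) H)
    (hh : ∀ u v, h u v = H (u, v)) (u v : ℝ) (hp : (u, v) ∈ UU ε H) :
    conormal (monge h) u v =
      ![fF ε H (u, v) * (-Dv e1 H (u, v)), fF ε H (u, v) * (-Dv e2 H (u, v)),
        fF ε H (u, v) * 1] := by
  rw [conormal, abs_eq_g hε hH hh u v hp, monge_vpd1 hH hh, monge_vpd2 hH hh]
  funext i
  fin_cases i <;> simp [crossProduct, fF] <;> ring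
end chart

section nuform
variable {ε : ℝ} {H : ℝ × ℝ → ℝ} {h : ℝ → ℝ → ℝ}

theorem nu0F_diffAt (hH : ContDiff ℝ (⊤ : ℕ∞) H) {p : ℝ × ℝ} (hp : p ∈ UU ε H) :
    DifferentiableAt ℝ (nu0F ε H) p :=
  (((cF_diffAt hH hp).mul (((gF_contDiff hH).dv e1).differentiable (by simp) p)).mul
    (((hH.dv e1).differentiable (by simp) p).neg)).add
    ((fF_diffAt hH hp).mul ((((hH.dv e1).dv e1).differentiable (by simp) p).neg))

theorem nu1F_diffAt (hH : ContDiff ℝ (⊤ : ℕ∞) H) {p : ℝ × ℝ} (hp : p ∈ UU ε H) :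
    DifferentiableAt ℝ (nu1F ε H) p :=
  (((cF_diffAt hH hp).mul (((gF_contDiff hH).dv e1).differentiable (by simp) p)).mul
    (((hH.dv e2).differentiable (by simp) p).neg)).add
    ((fF_diffAt hH hp).mul ((((hH.dv e2).dv e1).differentiable (by simp) p).neg))

theorem nu2F_diffAt (hH : ContDiff ℝ (⊤ : ℕ∞) H) {p : ℝ × ℝ} (hp : p ∈ UU ε H) :
    DifferentiableAt ℝ (nu2F ε H) p :=
  (cF_diffAt hH hp).mul (((gF_contDiff hH).dv e1).differentiable (by simp) p)

theorem nv0F_diffAt (hH : ContDiff ℝ (⊤ : ℕ∞) H) {p : ℝ × ℝ} (hp : p ∈ UU ε H) :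
    DifferentiableAt ℝ (nv0F ε H) p :=
  (((cF_diffAt hH hp).mul (((gF_contDiff hH).dv e2).differentiable (by simp) p)).mul
    (((hH.dv e1).differentiable (by simp) p).neg)).add
    ((fF_diffAt hH hp).mul ((((hH.dv e1).dv e2).differentiable (by simp) p).neg))

theorem nv1F_diffAt (hH : ContDiff ℝ (⊤ : ℕ∞) H) {p : ℝ × ℝ} (hp : p ∈ UU ε H) :
    DifferentiableAt ℝ (nv1F ε H) p :=
  (((cF_diffAt hH hp).mul (((gF_contDiff hH).dv e2).differentiable (by simp) p)).mul
    (((hH.dv e2).differentiable (by simp) p).neg)).add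
    ((fF_diffAt hH hp).mul ((((hH.dv e2).dv e2).differentiable (by simp) p).neg))

theorem nv2F_diffAt (hH : ContDiff ℝ (⊤ : ℕ∞) H) {p : ℝ × ℝ} (hp : p ∈ UU ε H) :
    DifferentiableAt ℝ (nv2F ε H) p :=
  (cF_diffAt hH hp).mul (((gF_contDiff hH).dv e2).differentiable (by simp) p)

theorem X0F_diffAt (hH : ContDiff ℝ (⊤ : ℕ∞) H) {p : ℝ × ℝ} (hp : p ∈ UU ε H) :
    DifferentiableAt ℝ (X0F ε H) p :=
  ((nu1F_diffAt hH hp).mul (nv2F_diffAt hH hp)).sub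
    ((nu2F_diffAt hH hp).mul (nv1F_diffAt hH hp))

theorem X1F_diffAt (hH : ContDiff ℝ (⊤ : ℕ∞) H) {p : ℝ × ℝ} (hp : p ∈ UU ε H) :
    DifferentiableAt ℝ (X1F ε H) p :=
  ((nu2F_diffAt hH hp).mul (nv0F_diffAt hH hp)).sub
    ((nu0F_diffAt hH hp).mul (nv2F_diffAt hH hp))

theorem X2F_diffAt (hH : ContDiff ℝ (⊤ : ℕ∞) H) {p : ℝ × ℝ} (hp : p ∈ UU ε H) :
    DifferentiableAt ℝ (X2F ε H) p :=
  ((nu0F_diffAt hH hp).mul (nv1F_diffAt hH hp)).sub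
    ((nu1F_diffAt hH hp).mul (nv0F_diffAt hH hp))

theorem vpd1_conormal (hε : ε = 1 ∨ ε = -1) (hH : ContDiff ℝ (⊤ : ℕ∞) H)
    (hh : ∀ u v, h u v = H (u, v)) (u v : ℝ) (hp : (u, v) ∈ UU ε H) :
    vpd1 (conormal (monge h)) u v = ![nu0F ε H (u, v), nu1F ε H (u, v), nu2F ε H (u, v)] := by
  funext i
  fin_cases i
  · show pd1 (fun a b => conormal (monge h) a b 0) u v = _
    have heq : ∀ q ∈ UU ε H, conormal (monge h) q.1 q.2 0
        = (fun q => fF ε H q * (-Dv e1 H q)) q := by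
      intro q hq
      have h2 : ((q.1, q.2) : ℝ × ℝ) ∈ UU ε H := by simpa using hq
      rw [conormal_eq hε hH hh q.1 q.2 h2]
      simp
    rw [pd1_eq (UU_open hH) hp heq
      ((fF_diffAt hH hp).fun_mul (((hH.dv e1).differentiable (by simp) _).fun_neg)),
      Dv_mul e1 (fF_diffAt hH hp) (((hH.dv e1).differentiable (by simp) _).fun_neg),
      Dv_fF hH hp, Dv_neg]
    show _ = nu0F ε H (u, v)
    rw [nu0F]
  · show pd1 (fun a b => conormal (monge h) a b 1) u v = _
    have heq : ∀ q ∈ UU ε H, conormal (monge h) q.1 q.2 1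
        = (fun q => fF ε H q * (-Dv e2 H q)) q := by
      intro q hq
      have h2 : ((q.1, q.2) : ℝ × ℝ) ∈ UU ε H := by simpa using hq
      rw [conormal_eq hε hH hh q.1 q.2 h2]
      simp
    rw [pd1_eq (UU_open hH) hp heq
      ((fF_diffAt hH hp).fun_mul (((hH.dv e2).differentiable (by simp) _).fun_neg)),
      Dv_mul e1 (fF_diffAt hH hp) (((hH.dv e2).differentiable (by simp) _).fun_neg),
      Dv_fF hH hp, Dv_neg]
    show _ = nu1F ε H (u, v)
    rw [nu1F]
  · show pd1 (fun a b => conormal (monge h) a b 2) u v = _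
    have heq : ∀ q ∈ UU ε H, conormal (monge h) q.1 q.2 2
        = (fun q => fF ε H q * 1) q := by
      intro q hq
      have h2 : ((q.1, q.2) : ℝ × ℝ) ∈ UU ε H := by simpa using hq
      rw [conormal_eq hε hH hh q.1 q.2 h2]
      simp
    rw [pd1_eq (UU_open hH) hp heq ((fF_diffAt hH hp).fun_mul (differentiableAt_const 1)),
      Dv_mul e1 (fF_diffAt hH hp) (differentiableAt_const 1),
      Dv_fF hH hp, Dv_const]
    show _ = nu2F ε H (u, v)
    rw [nu2F]
    ring

theorem vpd2_conormal (hε : ε = 1 ∨ ε = -1) (hH : ContDiff ℝ (⊤ : ℕ∞) H)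
    (hh : ∀ u v, h u v = H (u, v)) (u v : ℝ) (hp : (u, v) ∈ UU ε H) :
    vpd2 (conormal (monge h)) u v = ![nv0F ε H (u, v), nv1F ε H (u, v), nv2F ε H (u, v)] := by
  funext i
  fin_cases i
  · show pd2 (fun a b => conormal (monge h) a b 0) u v = _
    have heq : ∀ q ∈ UU ε H, conormal (monge h) q.1 q.2 0
        = (fun q => fF ε H q * (-Dv e1 H q)) q := by
      intro q hq
      have h2 : ((q.1, q.2) : ℝ × ℝ) ∈ UU ε H := by simpa using hq
      rw [conormal_eq hε hH hh q.1 q.2 h2]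
      simp
    rw [pd2_eq (UU_open hH) hp heq
      ((fF_diffAt hH hp).fun_mul (((hH.dv e1).differentiable (by simp) _).fun_neg)),
      Dv_mul e2 (fF_diffAt hH hp) (((hH.dv e1).differentiable (by simp) _).fun_neg),
      Dv_fF hH hp, Dv_neg]
    show _ = nv0F ε H (u, v)
    rw [nv0F]
  · show pd2 (fun a b => conormal (monge h) a b 1) u v = _
    have heq : ∀ q ∈ UU ε H, conormal (monge h) q.1 q.2 1
        = (fun q => fF ε H q * (-Dv e2 H q)) q := by
      intro q hq
      have h2 : ((q.1, q.2) : ℝ × ℝ) ∈ UU ε H := by simpa using hq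
      rw [conormal_eq hε hH hh q.1 q.2 h2]
      simp
    rw [pd2_eq (UU_open hH) hp heq
      ((fF_diffAt hH hp).fun_mul (((hH.dv e2).differentiable (by simp) _).fun_neg)),
      Dv_mul e2 (fF_diffAt hH hp) (((hH.dv e2).differentiable (by simp) _).fun_neg),
      Dv_fF hH hp, Dv_neg]
    show _ = nv1F ε H (u, v)
    rw [nv1F]
  · show pd2 (fun a b => conormal (monge h) a b 2) u v = _
    have heq : ∀ q ∈ UU ε H, conormal (monge h) q.1 q.2 2
        = (fun q => fF ε H q * 1) q := by
      intro q hq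
      have h2 : ((q.1, q.2) : ℝ × ℝ) ∈ UU ε H := by simpa using hq
      rw [conormal_eq hε hH hh q.1 q.2 h2]
      simp
    rw [pd2_eq (UU_open hH) hp heq ((fF_diffAt hH hp).fun_mul (differentiableAt_const 1)),
      Dv_mul e2 (fF_diffAt hH hp) (differentiableAt_const 1),
      Dv_fF hH hp, Dv_const]
    show _ = nv2F ε H (u, v)
    rw [nv2F]
    ring

theorem affNormal_eq (hε : ε = 1 ∨ ε = -1) (hH : ContDiff ℝ (⊤ : ℕ∞) H)
    (hh : ∀ u v, h u v = H (u, v)) (u v : ℝ) (hp : (u, v) ∈ UU ε H) :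
    affNormal (monge h) u v =
      ![fF ε H (u, v) * X0F ε H (u, v), fF ε H (u, v) * X1F ε H (u, v),
        fF ε H (u, v) * X2F ε H (u, v)] := by
  rw [affNormal, abs_eq_g hε hH hh u v hp, vpd1_conormal hε hH hh u v hp,
    vpd2_conormal hε hH hh u v hp]
  funext i
  fin_cases i <;>
    simp [crossProduct, X0F, X1F, X2F, fF] <;> ring

theorem vpd1_affNormal (hε : ε = 1 ∨ ε = -1) (hH : ContDiff ℝ (⊤ : ℕ∞) H)
    (hh : ∀ u v, h u v = H (u, v)) (u v : ℝ) (hp : (u, v) ∈ UU ε H) :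
    vpd1 (affNormal (monge h)) u v =
      ![Dv e1 (fun q => fF ε H q * X0F ε H q) (u, v),
        Dv e1 (fun q => fF ε H q * X1F ε H q) (u, v),
        Dv e1 (fun q => fF ε H q * X2F ε H q) (u, v)] := by
  funext i
  fin_cases i
  · show pd1 (fun a b => affNormal (monge h) a b 0) u v = _
    have heq : ∀ q ∈ UU ε H, affNormal (monge h) q.1 q.2 0
        = (fun q => fF ε H q * X0F ε H q) q := by
      intro q hq
      have h2 : ((q.1, q.2) : ℝ × ℝ) ∈ UU ε H := by simpa using hq
      rw [affNormal_eq hε hH hh q.1 q.2 h2]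
      simp
    rw [pd1_eq (UU_open hH) hp heq ((fF_diffAt hH hp).fun_mul (X0F_diffAt hH hp))]
    simp
  · show pd1 (fun a b => affNormal (monge h) a b 1) u v = _
    have heq : ∀ q ∈ UU ε H, affNormal (monge h) q.1 q.2 1
        = (fun q => fF ε H q * X1F ε H q) q := by
      intro q hq
      have h2 : ((q.1, q.2) : ℝ × ℝ) ∈ UU ε H := by simpa using hq
      rw [affNormal_eq hε hH hh q.1 q.2 h2]
      simp
    rw [pd1_eq (UU_open hH) hp heq ((fF_diffAt hH hp).fun_mul (X1F_diffAt hH hp))]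
    simp
  · show pd1 (fun a b => affNormal (monge h) a b 2) u v = _
    have heq : ∀ q ∈ UU ε H, affNormal (monge h) q.1 q.2 2
        = (fun q => fF ε H q * X2F ε H q) q := by
      intro q hq
      have h2 : ((q.1, q.2) : ℝ × ℝ) ∈ UU ε H := by simpa using hq
      rw [affNormal_eq hε hH hh q.1 q.2 h2]
      simp
    rw [pd1_eq (UU_open hH) hp heq ((fF_diffAt hH hp).fun_mul (X2F_diffAt hH hp))]
    simp

theorem vpd2_affNormal (hε : ε = 1 ∨ ε = -1) (hH : ContDiff ℝ (⊤ : ℕ∞) H)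
    (hh : ∀ u v, h u v = H (u, v)) (u v : ℝ) (hp : (u, v) ∈ UU ε H) :
    vpd2 (affNormal (monge h)) u v =
      ![Dv e2 (fun q => fF ε H q * X0F ε H q) (u, v),
        Dv e2 (fun q => fF ε H q * X1F ε H q) (u, v),
        Dv e2 (fun q => fF ε H q * X2F ε H q) (u, v)] := by
  funext i
  fin_cases i
  · show pd2 (fun a b => affNormal (monge h) a b 0) u v = _
    have heq : ∀ q ∈ UU ε H, affNormal (monge h) q.1 q.2 0
        = (fun q => fF ε H q * X0F ε H q) q := by
      intro q hq
      have h2 : ((q.1, q.2) : ℝ × ℝ) ∈ UU ε H := by simpa using hq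
      rw [affNormal_eq hε hH hh q.1 q.2 h2]
      simp
    rw [pd2_eq (UU_open hH) hp heq ((fF_diffAt hH hp).fun_mul (X0F_diffAt hH hp))]
    simp
  · show pd2 (fun a b => affNormal (monge h) a b 1) u v = _
    have heq : ∀ q ∈ UU ε H, affNormal (monge h) q.1 q.2 1
        = (fun q => fF ε H q * X1F ε H q) q := by
      intro q hq
      have h2 : ((q.1, q.2) : ℝ × ℝ) ∈ UU ε H := by simpa using hq
      rw [affNormal_eq hε hH hh q.1 q.2 h2]
      simp
    rw [pd2_eq (UU_open hH) hp heq ((fF_diffAt hH hp).fun_mul (X1F_diffAt hH hp))]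
    simp
  · show pd2 (fun a b => affNormal (monge h) a b 2) u v = _
    have heq : ∀ q ∈ UU ε H, affNormal (monge h) q.1 q.2 2
        = (fun q => fF ε H q * X2F ε H q) q := by
      intro q hq
      have h2 : ((q.1, q.2) : ℝ × ℝ) ∈ UU ε H := by simpa using hq
      rw [affNormal_eq hε hH hh q.1 q.2 h2]
      simp
    rw [pd2_eq (UU_open hH) hp heq ((fF_diffAt hH hp).fun_mul (X2F_diffAt hH hp))]
    simp

end nuform

section core
set_option maxHeartbeats 1600000 in
theorem core (ε σ q40 q31 q22 q13 q04 : ℝ) (hε : ε = 1 ∨ ε = -1)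
    (H : ℝ × ℝ → ℝ) (hH : ContDiff ℝ (⊤ : ℕ∞) H) (h : ℝ → ℝ → ℝ) (hh : ∀ u v, h u v = H (u, v))
    (hA0 : Dv e1 H (0, 0) = 0) (hB0 : Dv e2 H (0, 0) = 0)
    (hL0 : Dv e1 (Dv e1 H) (0, 0) = 1) (hM0 : Dv e2 (Dv e1 H) (0, 0) = 0)
    (hM10 : Dv e1 (Dv e2 H) (0, 0) = 0) (hN0 : Dv e2 (Dv e2 H) (0, 0) = ε)
    (c111 : Dv e1 (Dv e1 (Dv e1 H)) (0, 0) = σ)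
    (c211 : Dv e2 (Dv e1 (Dv e1 H)) (0, 0) = 0)
    (c121 : Dv e1 (Dv e2 (Dv e1 H)) (0, 0) = 0)
    (c221 : Dv e2 (Dv e2 (Dv e1 H)) (0, 0) = -ε * σ)
    (c112 : Dv e1 (Dv e1 (Dv e2 H)) (0, 0) = 0)
    (c212 : Dv e2 (Dv e1 (Dv e2 H)) (0, 0) = -ε * σ)
    (c122 : Dv e1 (Dv e2 (Dv e2 H)) (0, 0) = -ε * σ)
    (c222 : Dv e2 (Dv e2 (Dv e2 H)) (0, 0) = 0)
    (d1111 : Dv e1 (Dv e1 (Dv e1 (Dv e1 H))) (0, 0) = q40)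
    (d2111 : Dv e2 (Dv e1 (Dv e1 (Dv e1 H))) (0, 0) = q31)
    (d1211 : Dv e1 (Dv e2 (Dv e1 (Dv e1 H))) (0, 0) = q31)
    (d2211 : Dv e2 (Dv e2 (Dv e1 (Dv e1 H))) (0, 0) = q22)
    (d1122 : Dv e1 (Dv e1 (Dv e2 (Dv e2 H))) (0, 0) = q22)
    (d2122 : Dv e2 (Dv e1 (Dv e2 (Dv e2 H))) (0, 0) = q13)
    (d1222 : Dv e1 (Dv e2 (Dv e2 (Dv e2 H))) (0, 0) = q13)
    (d2222 : Dv e2 (Dv e2 (Dv e2 (Dv e2 H))) (0, 0) = q04) :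
    lA (monge h) 0 0 = (ε * q40 + q22 - 2 * ε * σ ^ 2) / 4 ∧
    mA (monge h) 0 0 = (ε * q31 + q13) / 4 ∧
    nA (monge h) 0 0 = (ε * q22 + q04 - 2 * σ ^ 2) / 4 := by
  have hε2 : ε * ε = 1 := by rcases hε with he | he <;> rw [he] <;> norm_num
  have dA := (hH.dv e1).differentiable (by simp)
  have dB := (hH.dv e2).differentiable (by simp)
  have dL := ((hH.dv e1).dv e1).differentiable (by simp)
  have dM := ((hH.dv e1).dv e2).differentiable (by simp)
  have dM1 := ((hH.dv e2).dv e1).differentiable (by simp)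
  have dN := ((hH.dv e2).dv e2).differentiable (by simp)
  have dL1 := (((hH.dv e1).dv e1).dv e1).differentiable (by simp)
  have dL2 := (((hH.dv e1).dv e1).dv e2).differentiable (by simp)
  have dM_1 := (((hH.dv e1).dv e2).dv e1).differentiable (by simp)
  have dM_2 := (((hH.dv e1).dv e2).dv e2).differentiable (by simp)
  have dN1 := (((hH.dv e2).dv e2).dv e1).differentiable (by simp)
  have dN2 := (((hH.dv e2).dv e2).dv e2).differentiable (by simp)
  have dg := (gF_contDiff hH).differentiable (by simp)
  have dg1 := ((gF_contDiff hH).dv e1).differentiable (by simp)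
  have dg2 := ((gF_contDiff hH).dv e2).differentiable (by simp)
  have hg0 : gF H (0, 0) = ε := by
    show Dv e1 (Dv e1 H) (0, 0) * Dv e2 (Dv e2 H) (0, 0)
      - Dv e2 (Dv e1 H) (0, 0) * Dv e2 (Dv e1 H) (0, 0) = ε
    rw [hL0, hN0, hM0]; ring
  have hεg0 : ε * gF H (0, 0) = 1 := by rw [hg0]; exact hε2
  have h0U : ((0, 0) : ℝ × ℝ) ∈ UU ε H := by
    show 0 < ε * gF H (0, 0)
    rw [hεg0]; norm_num
  have hf0 : fF ε H (0, 0) = 1 := by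
    show (ε * gF H (0, 0)) ^ (-(1 / 4) : ℝ) = 1
    rw [hεg0, Real.one_rpow]
  have hc0 : cF ε H (0, 0) = -ε / 4 := by
    show (-(1 / 4) * (ε * gF H (0, 0)) ^ (-(5 / 4) : ℝ)) * ε = -ε / 4
    rw [hεg0, Real.one_rpow]; ring
  -- first derivatives of g
  have hDg : ∀ (w : ℝ × ℝ) (p : ℝ × ℝ), Dv w (gF H) p =
      Dv w (Dv e1 (Dv e1 H)) p * Dv e2 (Dv e2 H) p
        + Dv e1 (Dv e1 H) p * Dv w (Dv e2 (Dv e2 H)) p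
      - (Dv w (Dv e2 (Dv e1 H)) p * Dv e2 (Dv e1 H) p
        + Dv e2 (Dv e1 H) p * Dv w (Dv e2 (Dv e1 H)) p) := by
    intro w p
    show Dv w (fun q => Dv e1 (Dv e1 H) q * Dv e2 (Dv e2 H) q
      - Dv e2 (Dv e1 H) q * Dv e2 (Dv e1 H) q) p = _
    rw [Dv_sub w ((dL p).fun_mul (dN p)) ((dM p).fun_mul (dM p)),
      Dv_mul w (dL p) (dN p), Dv_mul w (dM p) (dM p)]
  have hDg1f : Dv e1 (gF H) = fun p =>
      Dv e1 (Dv e1 (Dv e1 H)) p * Dv e2 (Dv e2 H) p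
        + Dv e1 (Dv e1 H) p * Dv e1 (Dv e2 (Dv e2 H)) p
      - (Dv e1 (Dv e2 (Dv e1 H)) p * Dv e2 (Dv e1 H) p
        + Dv e2 (Dv e1 H) p * Dv e1 (Dv e2 (Dv e1 H)) p) := funext fun p => hDg e1 p
  have hDg2f : Dv e2 (gF H) = fun p =>
      Dv e2 (Dv e1 (Dv e1 H)) p * Dv e2 (Dv e2 H) p
        + Dv e1 (Dv e1 H) p * Dv e2 (Dv e2 (Dv e2 H)) p
      - (Dv e2 (Dv e2 (Dv e1 H)) p * Dv e2 (Dv e1 H) p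
        + Dv e2 (Dv e1 H) p * Dv e2 (Dv e2 (Dv e1 H)) p) := funext fun p => hDg e2 p
  have hDg1_0 : Dv e1 (gF H) (0, 0) = 0 := by
    rw [hDg e1 (0, 0), c111, c122, c121, hL0, hM0, hN0]; ring
  have hDg2_0 : Dv e2 (gF H) (0, 0) = 0 := by
    rw [hDg e2 (0, 0), c211, c222, c221, hL0, hM0, hN0]; ring
  have hG11 : Dv e1 (Dv e1 (gF H)) (0, 0) = ε * q40 - 2 * ε * σ ^ 2 + q22 := by
    rw [hDg1f]
    rw [Dv_sub e1 ((((dL1) (0,0)).fun_mul (dN (0,0))).fun_add ((dL (0,0)).fun_mul ((dN1) (0,0))))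
        ((((dM_1) (0,0)).fun_mul (dM (0,0))).fun_add ((dM (0,0)).fun_mul ((dM_1) (0,0)))),
      Dv_add e1 (((dL1) (0,0)).fun_mul (dN (0,0))) ((dL (0,0)).fun_mul ((dN1) (0,0))),
      Dv_add e1 (((dM_1) (0,0)).fun_mul (dM (0,0))) ((dM (0,0)).fun_mul ((dM_1) (0,0))),
      Dv_mul e1 ((dL1) (0,0)) (dN (0,0)),
      Dv_mul e1 ((dL) (0,0)) ((dN1) (0,0)),
      Dv_mul e1 ((dM_1) (0,0)) ((dM) (0,0)),
      Dv_mul e1 ((dM) (0,0)) ((dM_1) (0,0))]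
    simp only [d1111, d1122, c111, c122, c121, hL0, hM0, hN0]
    ring
  have hG21 : Dv e2 (Dv e1 (gF H)) (0, 0) = ε * q31 + q13 := by
    rw [hDg1f]
    rw [Dv_sub e2 ((((dL1) (0,0)).fun_mul (dN (0,0))).fun_add ((dL (0,0)).fun_mul ((dN1) (0,0))))
        ((((dM_1) (0,0)).fun_mul (dM (0,0))).fun_add ((dM (0,0)).fun_mul ((dM_1) (0,0)))),
      Dv_add e2 (((dL1) (0,0)).fun_mul (dN (0,0))) ((dL (0,0)).fun_mul ((dN1) (0,0))),
      Dv_add e2 (((dM_1) (0,0)).fun_mul (dM (0,0))) ((dM (0,0)).fun_mul ((dM_1) (0,0))),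
      Dv_mul e2 ((dL1) (0,0)) (dN (0,0)),
      Dv_mul e2 ((dL) (0,0)) ((dN1) (0,0)),
      Dv_mul e2 ((dM_1) (0,0)) ((dM) (0,0)),
      Dv_mul e2 ((dM) (0,0)) ((dM_1) (0,0))]
    simp only [d2111, d2122, c111, c122, c121, c211, c222, c221, hL0, hM0, hN0]
    ring
  have hG12 : Dv e1 (Dv e2 (gF H)) (0, 0) = ε * q31 + q13 := by
    rw [hDg2f]
    rw [Dv_sub e1 ((((dL2) (0,0)).fun_mul (dN (0,0))).fun_add ((dL (0,0)).fun_mul ((dN2) (0,0))))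
        ((((dM_2) (0,0)).fun_mul (dM (0,0))).fun_add ((dM (0,0)).fun_mul ((dM_2) (0,0)))),
      Dv_add e1 (((dL2) (0,0)).fun_mul (dN (0,0))) ((dL (0,0)).fun_mul ((dN2) (0,0))),
      Dv_add e1 (((dM_2) (0,0)).fun_mul (dM (0,0))) ((dM (0,0)).fun_mul ((dM_2) (0,0))),
      Dv_mul e1 ((dL2) (0,0)) (dN (0,0)),
      Dv_mul e1 ((dL) (0,0)) ((dN2) (0,0)),
      Dv_mul e1 ((dM_2) (0,0)) ((dM) (0,0)),
      Dv_mul e1 ((dM) (0,0)) ((dM_2) (0,0))]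
    simp only [d1211, d1222, c211, c222, c221, c111, c122, c121, hL0, hM0, hN0]
    ring
  have hG22 : Dv e2 (Dv e2 (gF H)) (0, 0) = ε * q22 + q04 - 2 * σ ^ 2 := by
    rw [hDg2f]
    rw [Dv_sub e2 ((((dL2) (0,0)).fun_mul (dN (0,0))).fun_add ((dL (0,0)).fun_mul ((dN2) (0,0))))
        ((((dM_2) (0,0)).fun_mul (dM (0,0))).fun_add ((dM (0,0)).fun_mul ((dM_2) (0,0)))),
      Dv_add e2 (((dL2) (0,0)).fun_mul (dN (0,0))) ((dL (0,0)).fun_mul ((dN2) (0,0))),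
      Dv_add e2 (((dM_2) (0,0)).fun_mul (dM (0,0))) ((dM (0,0)).fun_mul ((dM_2) (0,0))),
      Dv_mul e2 ((dL2) (0,0)) (dN (0,0)),
      Dv_mul e2 ((dL) (0,0)) ((dN2) (0,0)),
      Dv_mul e2 ((dM_2) (0,0)) ((dM) (0,0)),
      Dv_mul e2 ((dM) (0,0)) ((dM_2) (0,0))]
    simp only [d2211, d2222, c211, c222, c221, hL0, hM0, hN0]
    linear_combination (-2 * σ ^ 2) * hε2
  have hnu0v : nu0F ε H (0, 0) = -1 := by
    show cF ε H (0,0) * Dv e1 (gF H) (0,0) * (-Dv e1 H (0,0))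
      + fF ε H (0,0) * (-Dv e1 (Dv e1 H) (0,0)) = -1
    simp only [hDg1_0, hDg2_0, hf0, hL0, hA0]; ring
  have hnu1v : nu1F ε H (0, 0) = 0 := by
    show cF ε H (0,0) * Dv e1 (gF H) (0,0) * (-Dv e2 H (0,0))
      + fF ε H (0,0) * (-Dv e1 (Dv e2 H) (0,0)) = 0
    simp only [hDg1_0, hDg2_0, hf0, hM10, hB0]; ring
  have hnu2v : nu2F ε H (0, 0) = 0 := by
    show cF ε H (0,0) * Dv e1 (gF H) (0,0) = 0
    simp only [hDg1_0]; ring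
  have hnv0v : nv0F ε H (0, 0) = 0 := by
    show cF ε H (0,0) * Dv e2 (gF H) (0,0) * (-Dv e1 H (0,0))
      + fF ε H (0,0) * (-Dv e2 (Dv e1 H) (0,0)) = 0
    simp only [hDg2_0, hDg1_0, hf0, hM0, hA0]; ring
  have hnv1v : nv1F ε H (0, 0) = -ε := by
    show cF ε H (0,0) * Dv e2 (gF H) (0,0) * (-Dv e2 H (0,0))
      + fF ε H (0,0) * (-Dv e2 (Dv e2 H) (0,0)) = -ε
    simp only [hDg2_0, hDg1_0, hf0, hN0, hB0]; ring
  have hnv2v : nv2F ε H (0, 0) = 0 := by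
    show cF ε H (0,0) * Dv e2 (gF H) (0,0) = 0
    simp only [hDg2_0]; ring
  have hDnu01 : Dv e1 (nu0F ε H) (0, 0) = -σ := by
    show Dv e1 (fun p => cF ε H p * Dv e1 (gF H) p * (-Dv e1 H p)
      + fF ε H p * (-Dv e1 (Dv e1 H) p)) (0, 0) = _
    rw [Dv_add e1 (((cF_diffAt hH h0U).fun_mul (dg1 (0,0))).fun_mul ((dA (0,0)).fun_neg))
        ((fF_diffAt hH h0U).fun_mul ((dL (0,0)).fun_neg)),
      Dv_mul e1 ((cF_diffAt hH h0U).fun_mul (dg1 (0,0))) ((dA (0,0)).fun_neg),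
      Dv_mul e1 (cF_diffAt hH h0U) (dg1 (0,0)),
      Dv_mul e1 (fF_diffAt hH h0U) ((dL (0,0)).fun_neg),
      Dv_neg, Dv_neg, Dv_fF hH h0U]
    simp only [hDg1_0, hDg2_0, hA0, hc0, hG11, hf0, c111, hL0]
    ring
  have hDnu11 : Dv e1 (nu1F ε H) (0, 0) = 0 := by
    show Dv e1 (fun p => cF ε H p * Dv e1 (gF H) p * (-Dv e2 H p)
      + fF ε H p * (-Dv e1 (Dv e2 H) p)) (0, 0) = _
    rw [Dv_add e1 (((cF_diffAt hH h0U).fun_mul (dg1 (0,0))).fun_mul ((dB (0,0)).fun_neg))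
        ((fF_diffAt hH h0U).fun_mul ((dM1 (0,0)).fun_neg)),
      Dv_mul e1 ((cF_diffAt hH h0U).fun_mul (dg1 (0,0))) ((dB (0,0)).fun_neg),
      Dv_mul e1 (cF_diffAt hH h0U) (dg1 (0,0)),
      Dv_mul e1 (fF_diffAt hH h0U) ((dM1 (0,0)).fun_neg),
      Dv_neg, Dv_neg, Dv_fF hH h0U]
    simp only [hDg1_0, hDg2_0, hB0, hc0, hG11, hf0, c112, hM10]
    ring
  have hDnu21 : Dv e1 (nu2F ε H) (0, 0) = -ε / 4 * (ε * q40 - 2 * ε * σ ^ 2 + q22) := by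
    show Dv e1 (fun p => cF ε H p * Dv e1 (gF H) p) (0, 0) = _
    rw [Dv_mul e1 (cF_diffAt hH h0U) (dg1 (0,0))]
    simp only [hDg1_0, hDg2_0, hc0, hG11]
    ring
  have hDnu02 : Dv e2 (nu0F ε H) (0, 0) = 0 := by
    show Dv e2 (fun p => cF ε H p * Dv e1 (gF H) p * (-Dv e1 H p)
      + fF ε H p * (-Dv e1 (Dv e1 H) p)) (0, 0) = _
    rw [Dv_add e2 (((cF_diffAt hH h0U).fun_mul (dg1 (0,0))).fun_mul ((dA (0,0)).fun_neg))
        ((fF_diffAt hH h0U).fun_mul ((dL (0,0)).fun_neg)),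
      Dv_mul e2 ((cF_diffAt hH h0U).fun_mul (dg1 (0,0))) ((dA (0,0)).fun_neg),
      Dv_mul e2 (cF_diffAt hH h0U) (dg1 (0,0)),
      Dv_mul e2 (fF_diffAt hH h0U) ((dL (0,0)).fun_neg),
      Dv_neg, Dv_neg, Dv_fF hH h0U]
    simp only [hDg1_0, hDg2_0, hA0, hc0, hG21, hf0, c211, hL0]
    ring
  have hDnu12 : Dv e2 (nu1F ε H) (0, 0) = ε * σ := by
    show Dv e2 (fun p => cF ε H p * Dv e1 (gF H) p * (-Dv e2 H p)
      + fF ε H p * (-Dv e1 (Dv e2 H) p)) (0, 0) = _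
    rw [Dv_add e2 (((cF_diffAt hH h0U).fun_mul (dg1 (0,0))).fun_mul ((dB (0,0)).fun_neg))
        ((fF_diffAt hH h0U).fun_mul ((dM1 (0,0)).fun_neg)),
      Dv_mul e2 ((cF_diffAt hH h0U).fun_mul (dg1 (0,0))) ((dB (0,0)).fun_neg),
      Dv_mul e2 (cF_diffAt hH h0U) (dg1 (0,0)),
      Dv_mul e2 (fF_diffAt hH h0U) ((dM1 (0,0)).fun_neg),
      Dv_neg, Dv_neg, Dv_fF hH h0U]
    simp only [hDg1_0, hDg2_0, hB0, hc0, hG21, hf0, c212, hM10]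
    ring
  have hDnu22 : Dv e2 (nu2F ε H) (0, 0) = -ε / 4 * (ε * q31 + q13) := by
    show Dv e2 (fun p => cF ε H p * Dv e1 (gF H) p) (0, 0) = _
    rw [Dv_mul e2 (cF_diffAt hH h0U) (dg1 (0,0))]
    simp only [hDg1_0, hDg2_0, hc0, hG21]
    ring
  have hDnv01 : Dv e1 (nv0F ε H) (0, 0) = 0 := by
    show Dv e1 (fun p => cF ε H p * Dv e2 (gF H) p * (-Dv e1 H p)
      + fF ε H p * (-Dv e2 (Dv e1 H) p)) (0, 0) = _
    rw [Dv_add e1 (((cF_diffAt hH h0U).fun_mul (dg2 (0,0))).fun_mul ((dA (0,0)).fun_neg))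
        ((fF_diffAt hH h0U).fun_mul ((dM (0,0)).fun_neg)),
      Dv_mul e1 ((cF_diffAt hH h0U).fun_mul (dg2 (0,0))) ((dA (0,0)).fun_neg),
      Dv_mul e1 (cF_diffAt hH h0U) (dg2 (0,0)),
      Dv_mul e1 (fF_diffAt hH h0U) ((dM (0,0)).fun_neg),
      Dv_neg, Dv_neg, Dv_fF hH h0U]
    simp only [hDg2_0, hDg1_0, hA0, hc0, hG12, hf0, c121, hM0]
    ring
  have hDnv11 : Dv e1 (nv1F ε H) (0, 0) = ε * σ := by
    show Dv e1 (fun p => cF ε H p * Dv e2 (gF H) p * (-Dv e2 H p)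
      + fF ε H p * (-Dv e2 (Dv e2 H) p)) (0, 0) = _
    rw [Dv_add e1 (((cF_diffAt hH h0U).fun_mul (dg2 (0,0))).fun_mul ((dB (0,0)).fun_neg))
        ((fF_diffAt hH h0U).fun_mul ((dN (0,0)).fun_neg)),
      Dv_mul e1 ((cF_diffAt hH h0U).fun_mul (dg2 (0,0))) ((dB (0,0)).fun_neg),
      Dv_mul e1 (cF_diffAt hH h0U) (dg2 (0,0)),
      Dv_mul e1 (fF_diffAt hH h0U) ((dN (0,0)).fun_neg),
      Dv_neg, Dv_neg, Dv_fF hH h0U]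
    simp only [hDg2_0, hDg1_0, hB0, hc0, hG12, hf0, c122, hN0]
    ring
  have hDnv21 : Dv e1 (nv2F ε H) (0, 0) = -ε / 4 * (ε * q31 + q13) := by
    show Dv e1 (fun p => cF ε H p * Dv e2 (gF H) p) (0, 0) = _
    rw [Dv_mul e1 (cF_diffAt hH h0U) (dg2 (0,0))]
    simp only [hDg2_0, hDg1_0, hc0, hG12]
    ring
  have hDnv02 : Dv e2 (nv0F ε H) (0, 0) = ε * σ := by
    show Dv e2 (fun p => cF ε H p * Dv e2 (gF H) p * (-Dv e1 H p)
      + fF ε H p * (-Dv e2 (Dv e1 H) p)) (0, 0) = _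
    rw [Dv_add e2 (((cF_diffAt hH h0U).fun_mul (dg2 (0,0))).fun_mul ((dA (0,0)).fun_neg))
        ((fF_diffAt hH h0U).fun_mul ((dM (0,0)).fun_neg)),
      Dv_mul e2 ((cF_diffAt hH h0U).fun_mul (dg2 (0,0))) ((dA (0,0)).fun_neg),
      Dv_mul e2 (cF_diffAt hH h0U) (dg2 (0,0)),
      Dv_mul e2 (fF_diffAt hH h0U) ((dM (0,0)).fun_neg),
      Dv_neg, Dv_neg, Dv_fF hH h0U]
    simp only [hDg2_0, hDg1_0, hA0, hc0, hG22, hf0, c221, hM0]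
    ring
  have hDnv12 : Dv e2 (nv1F ε H) (0, 0) = 0 := by
    show Dv e2 (fun p => cF ε H p * Dv e2 (gF H) p * (-Dv e2 H p)
      + fF ε H p * (-Dv e2 (Dv e2 H) p)) (0, 0) = _
    rw [Dv_add e2 (((cF_diffAt hH h0U).fun_mul (dg2 (0,0))).fun_mul ((dB (0,0)).fun_neg))
        ((fF_diffAt hH h0U).fun_mul ((dN (0,0)).fun_neg)),
      Dv_mul e2 ((cF_diffAt hH h0U).fun_mul (dg2 (0,0))) ((dB (0,0)).fun_neg),
      Dv_mul e2 (cF_diffAt hH h0U) (dg2 (0,0)),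
      Dv_mul e2 (fF_diffAt hH h0U) ((dN (0,0)).fun_neg),
      Dv_neg, Dv_neg, Dv_fF hH h0U]
    simp only [hDg2_0, hDg1_0, hB0, hc0, hG22, hf0, c222, hN0]
    ring
  have hDnv22 : Dv e2 (nv2F ε H) (0, 0) = -ε / 4 * (ε * q22 + q04 - 2 * σ ^ 2) := by
    show Dv e2 (fun p => cF ε H p * Dv e2 (gF H) p) (0, 0) = _
    rw [Dv_mul e2 (cF_diffAt hH h0U) (dg2 (0,0))]
    simp only [hDg2_0, hDg1_0, hc0, hG22]
    ring
  have hX01 : Dv e1 (X0F ε H) (0, 0) = -(ε * (ε * q40 - 2 * ε * σ ^ 2 + q22) * ε) / 4 := by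
    show Dv e1 (fun p => nu1F ε H p * nv2F ε H p - nu2F ε H p * nv1F ε H p) (0, 0) = _
    rw [Dv_sub e1 ((nu1F_diffAt hH h0U).fun_mul (nv2F_diffAt hH h0U)) ((nu2F_diffAt hH h0U).fun_mul (nv1F_diffAt hH h0U)),
      Dv_mul e1 (nu1F_diffAt hH h0U) (nv2F_diffAt hH h0U),
      Dv_mul e1 (nu2F_diffAt hH h0U) (nv1F_diffAt hH h0U)]
    rw [hDnu11, hDnu21, hDnv11, hDnv21, hnu1v, hnu2v, hnv1v, hnv2v]
    ring
  have hX11 : Dv e1 (X1F ε H) (0, 0) = -(ε * (ε * q31 + q13)) / 4 := by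
    show Dv e1 (fun p => nu2F ε H p * nv0F ε H p - nu0F ε H p * nv2F ε H p) (0, 0) = _
    rw [Dv_sub e1 ((nu2F_diffAt hH h0U).fun_mul (nv0F_diffAt hH h0U)) ((nu0F_diffAt hH h0U).fun_mul (nv2F_diffAt hH h0U)),
      Dv_mul e1 (nu2F_diffAt hH h0U) (nv0F_diffAt hH h0U),
      Dv_mul e1 (nu0F_diffAt hH h0U) (nv2F_diffAt hH h0U)]
    rw [hDnu01, hDnu21, hDnv01, hDnv21, hnu0v, hnu2v, hnv0v, hnv2v]
    ring
  have hX21 : Dv e1 (X2F ε H) (0, 0) = 0 := by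
    show Dv e1 (fun p => nu0F ε H p * nv1F ε H p - nu1F ε H p * nv0F ε H p) (0, 0) = _
    rw [Dv_sub e1 ((nu0F_diffAt hH h0U).fun_mul (nv1F_diffAt hH h0U)) ((nu1F_diffAt hH h0U).fun_mul (nv0F_diffAt hH h0U)),
      Dv_mul e1 (nu0F_diffAt hH h0U) (nv1F_diffAt hH h0U),
      Dv_mul e1 (nu1F_diffAt hH h0U) (nv0F_diffAt hH h0U)]
    rw [hDnu01, hDnu11, hDnv01, hDnv11, hnu0v, hnu1v, hnv0v, hnv1v]
    ring
  have hX02 : Dv e2 (X0F ε H) (0, 0) = -(ε * (ε * q31 + q13) * ε) / 4 := by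
    show Dv e2 (fun p => nu1F ε H p * nv2F ε H p - nu2F ε H p * nv1F ε H p) (0, 0) = _
    rw [Dv_sub e2 ((nu1F_diffAt hH h0U).fun_mul (nv2F_diffAt hH h0U)) ((nu2F_diffAt hH h0U).fun_mul (nv1F_diffAt hH h0U)),
      Dv_mul e2 (nu1F_diffAt hH h0U) (nv2F_diffAt hH h0U),
      Dv_mul e2 (nu2F_diffAt hH h0U) (nv1F_diffAt hH h0U)]
    rw [hDnu12, hDnu22, hDnv12, hDnv22, hnu1v, hnu2v, hnv1v, hnv2v]
    ring
  have hX12 : Dv e2 (X1F ε H) (0, 0) = -(ε * (ε * q22 + q04 - 2 * σ ^ 2)) / 4 := by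
    show Dv e2 (fun p => nu2F ε H p * nv0F ε H p - nu0F ε H p * nv2F ε H p) (0, 0) = _
    rw [Dv_sub e2 ((nu2F_diffAt hH h0U).fun_mul (nv0F_diffAt hH h0U)) ((nu0F_diffAt hH h0U).fun_mul (nv2F_diffAt hH h0U)),
      Dv_mul e2 (nu2F_diffAt hH h0U) (nv0F_diffAt hH h0U),
      Dv_mul e2 (nu0F_diffAt hH h0U) (nv2F_diffAt hH h0U)]
    rw [hDnu02, hDnu22, hDnv02, hDnv22, hnu0v, hnu2v, hnv0v, hnv2v]
    ring
  have hX22 : Dv e2 (X2F ε H) (0, 0) = 0 := by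
    show Dv e2 (fun p => nu0F ε H p * nv1F ε H p - nu1F ε H p * nv0F ε H p) (0, 0) = _
    rw [Dv_sub e2 ((nu0F_diffAt hH h0U).fun_mul (nv1F_diffAt hH h0U)) ((nu1F_diffAt hH h0U).fun_mul (nv0F_diffAt hH h0U)),
      Dv_mul e2 (nu0F_diffAt hH h0U) (nv1F_diffAt hH h0U),
      Dv_mul e2 (nu1F_diffAt hH h0U) (nv0F_diffAt hH h0U)]
    rw [hDnu02, hDnu12, hDnv02, hDnv12, hnu0v, hnu1v, hnv0v, hnv1v]
    ring
  have hxi01 : Dv e1 (fun q => fF ε H q * X0F ε H q) (0, 0) = Dv e1 (X0F ε H) (0, 0) := by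
    rw [Dv_mul e1 (fF_diffAt hH h0U) (X0F_diffAt hH h0U), Dv_fF hH h0U, hDg1_0, hf0]
    ring
  have hxi11 : Dv e1 (fun q => fF ε H q * X1F ε H q) (0, 0) = Dv e1 (X1F ε H) (0, 0) := by
    rw [Dv_mul e1 (fF_diffAt hH h0U) (X1F_diffAt hH h0U), Dv_fF hH h0U, hDg1_0, hf0]
    ring
  have hxi21 : Dv e1 (fun q => fF ε H q * X2F ε H q) (0, 0) = Dv e1 (X2F ε H) (0, 0) := by
    rw [Dv_mul e1 (fF_diffAt hH h0U) (X2F_diffAt hH h0U), Dv_fF hH h0U, hDg1_0, hf0]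
    ring
  have hxi02 : Dv e2 (fun q => fF ε H q * X0F ε H q) (0, 0) = Dv e2 (X0F ε H) (0, 0) := by
    rw [Dv_mul e2 (fF_diffAt hH h0U) (X0F_diffAt hH h0U), Dv_fF hH h0U, hDg2_0, hf0]
    ring
  have hxi12 : Dv e2 (fun q => fF ε H q * X1F ε H q) (0, 0) = Dv e2 (X1F ε H) (0, 0) := by
    rw [Dv_mul e2 (fF_diffAt hH h0U) (X1F_diffAt hH h0U), Dv_fF hH h0U, hDg2_0, hf0]
    ring
  have hxi22 : Dv e2 (fun q => fF ε H q * X2F ε H q) (0, 0) = Dv e2 (X2F ε H) (0, 0) := by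
    rw [Dv_mul e2 (fF_diffAt hH h0U) (X2F_diffAt hH h0U), Dv_fF hH h0U, hDg2_0, hf0]
    ring
  have hcu := vpd1_conormal hε hH hh 0 0 h0U
  have hcv := vpd2_conormal hε hH hh 0 0 h0U
  have hau := vpd1_affNormal hε hH hh 0 0 h0U
  have hav := vpd2_affNormal hε hH hh 0 0 h0U
  refine ⟨?_, ?_, ?_⟩
  · rw [lA, hcu, hau]
    simp only [dotProduct, Fin.sum_univ_three, Matrix.cons_val_zero, Matrix.cons_val_one,
      Matrix.head_cons, Matrix.cons_val_two, Matrix.tail_cons]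
    simp only [hxi01, hxi11, hxi21, hX01, hX11, hX21, hnu0v, hnu1v, hnu2v]
    linear_combination ((ε * q40 - 2 * ε * σ ^ 2 + q22) / 4) * hε2
  · rw [mA, hcu, hav]
    simp only [dotProduct, Fin.sum_univ_three, Matrix.cons_val_zero, Matrix.cons_val_one,
      Matrix.head_cons, Matrix.cons_val_two, Matrix.tail_cons]
    simp only [hxi02, hxi12, hxi22, hX02, hX12, hX22, hnu0v, hnu1v, hnu2v]
    linear_combination ((ε * q31 + q13) / 4) * hε2
  · rw [nA, hcv, hav]
    simp only [dotProduct, Fin.sum_univ_three, Matrix.cons_val_zero, Matrix.cons_val_one,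
      Matrix.head_cons, Matrix.cons_val_two, Matrix.tail_cons]
    simp only [hxi02, hxi12, hxi22, hX02, hX12, hX22, hnv0v, hnv1v, hnv2v]
    linear_combination ((ε * q22 + q04 - 2 * σ ^ 2) / 4) * hε2

end core

set_option maxHeartbeats 4000000 in
/-- In the Pick normal form chart (a non-parabolic point), the origin is a
flat affine umbilic point — i.e. simultaneously affine umbilic (`q₃₁ = -εq₁₃` and
`q₄₀ = q₀₄` in this chart) and affine parabolic (`(ln - m²)(0,0) = 0`) — if and only if
`q₃₁ = -εq₁₃`, `q₄₀ = q₀₄` and `q₂₂ = -ε(-2σ² + q₄₀)`; equivalently, under these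
conditions `l(0,0) = m(0,0) = n(0,0) = 0`. -/
theorem flat_affine_umbilic_characterization
    (ε σ q40 q31 q22 q13 q04 : ℝ) (hε : ε = 1 ∨ ε = -1)
    (r : ℝ → ℝ → ℝ) (hr : ContDiff ℝ (⊤ : ℕ∞) (fun p : ℝ × ℝ => r p.1 p.2))
    (hjet : ∀ k : ℕ, k ≤ 4 → iteratedFDeriv ℝ k (fun p : ℝ × ℝ => r p.1 p.2) (0, 0) = 0)
    (h : ℝ → ℝ → ℝ)
    (hdef : h = fun u v => (1 / 2) * (u ^ 2 + ε * v ^ 2) + (σ / 6) * (u ^ 3 - 3 * ε * u * v ^ 2)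
      + (1 / 24) * (q40 * u ^ 4 + 4 * q31 * u ^ 3 * v + 6 * q22 * u ^ 2 * v ^ 2
          + 4 * q13 * u * v ^ 3 + q04 * v ^ 4) + r u v) :
    (((q31 = -ε * q13 ∧ q40 = q04) ∧
        lA (monge h) 0 0 * nA (monge h) 0 0 - (mA (monge h) 0 0) ^ 2 = 0) ↔
      (q31 = -ε * q13 ∧ q40 = q04 ∧ q22 = -ε * (-2 * σ ^ 2 + q40))) ∧
    ((q31 = -ε * q13 ∧ q40 = q04 ∧ q22 = -ε * (-2 * σ ^ 2 + q40)) →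
      lA (monge h) 0 0 = 0 ∧ mA (monge h) 0 0 = 0 ∧ nA (monge h) 0 0 = 0) := by
  set RR : ℝ × ℝ → ℝ := fun p => r p.1 p.2 with hRRdef
  have hr' : ContDiff ℝ (⊤ : ℕ∞) RR := hr
  have hjet' : ∀ k : ℕ, k ≤ 4 → iteratedFDeriv ℝ k RR ((0 : ℝ), (0 : ℝ)) = 0 := hjet
  set HH : ℝ × ℝ → ℝ := fun p =>
    (1/2) * (p.1 ^ 2 + ε * p.2 ^ 2) + (σ/6) * (p.1 ^ 3 - 3 * ε * p.1 * p.2 ^ 2)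
      + (1/24) * (q40 * p.1 ^ 4 + 4 * q31 * p.1 ^ 3 * p.2 + 6 * q22 * p.1 ^ 2 * p.2 ^ 2
        + 4 * q13 * p.1 * p.2 ^ 3 + q04 * p.2 ^ 4) + RR p with hHHdef
  have hHH : ContDiff ℝ (⊤ : ℕ∞) HH := by
    rw [hHHdef]
    exact ContDiff.add (by fun_prop) hr'
  have hh' : ∀ u v, h u v = HH (u, v) := by
    intro u v
    rw [hdef, hHHdef, hRRdef]
  have smR : ContDiff ℝ (⊤ : ℕ∞) RR := hr'
  have smR1 : ContDiff ℝ (⊤ : ℕ∞) (Dv e1 (RR)) := smR.dv e1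
  have smR2 : ContDiff ℝ (⊤ : ℕ∞) (Dv e2 (RR)) := smR.dv e2
  have smR11 : ContDiff ℝ (⊤ : ℕ∞) (Dv e1 (Dv e1 (RR))) := smR1.dv e1
  have smR21 : ContDiff ℝ (⊤ : ℕ∞) (Dv e2 (Dv e1 (RR))) := smR1.dv e2
  have smR12 : ContDiff ℝ (⊤ : ℕ∞) (Dv e1 (Dv e2 (RR))) := smR2.dv e1
  have smR22 : ContDiff ℝ (⊤ : ℕ∞) (Dv e2 (Dv e2 (RR))) := smR2.dv e2
  have smR111 : ContDiff ℝ (⊤ : ℕ∞) (Dv e1 (Dv e1 (Dv e1 (RR)))) := smR11.dv e1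
  have smR211 : ContDiff ℝ (⊤ : ℕ∞) (Dv e2 (Dv e1 (Dv e1 (RR)))) := smR11.dv e2
  have smR122 : ContDiff ℝ (⊤ : ℕ∞) (Dv e1 (Dv e2 (Dv e2 (RR)))) := smR22.dv e1
  have smR222 : ContDiff ℝ (⊤ : ℕ∞) (Dv e2 (Dv e2 (Dv e2 (RR)))) := smR22.dv e2
  have jR : ∀ k : ℕ, k ≤ 4 → iteratedFDeriv ℝ k RR ((0 : ℝ), (0 : ℝ)) = 0 := hjet'
  have jR1 : ∀ k : ℕ, k ≤ 3 → iteratedFDeriv ℝ k (Dv e1 (RR)) ((0 : ℝ), (0 : ℝ)) = 0 :=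
    jet_dv smR e1 _ 3 (fun k hk => jR k (by omega))
  have jR2 : ∀ k : ℕ, k ≤ 3 → iteratedFDeriv ℝ k (Dv e2 (RR)) ((0 : ℝ), (0 : ℝ)) = 0 :=
    jet_dv smR e2 _ 3 (fun k hk => jR k (by omega))
  have jR11 : ∀ k : ℕ, k ≤ 2 → iteratedFDeriv ℝ k (Dv e1 (Dv e1 (RR))) ((0 : ℝ), (0 : ℝ)) = 0 :=
    jet_dv smR1 e1 _ 2 (fun k hk => jR1 k (by omega))
  have jR21 : ∀ k : ℕ, k ≤ 2 → iteratedFDeriv ℝ k (Dv e2 (Dv e1 (RR))) ((0 : ℝ), (0 : ℝ)) = 0 :=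
    jet_dv smR1 e2 _ 2 (fun k hk => jR1 k (by omega))
  have jR12 : ∀ k : ℕ, k ≤ 2 → iteratedFDeriv ℝ k (Dv e1 (Dv e2 (RR))) ((0 : ℝ), (0 : ℝ)) = 0 :=
    jet_dv smR2 e1 _ 2 (fun k hk => jR2 k (by omega))
  have jR22 : ∀ k : ℕ, k ≤ 2 → iteratedFDeriv ℝ k (Dv e2 (Dv e2 (RR))) ((0 : ℝ), (0 : ℝ)) = 0 :=
    jet_dv smR2 e2 _ 2 (fun k hk => jR2 k (by omega))
  have jR111 : ∀ k : ℕ, k ≤ 1 → iteratedFDeriv ℝ k (Dv e1 (Dv e1 (Dv e1 (RR)))) ((0 : ℝ), (0 : ℝ)) = 0 :=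
    jet_dv smR11 e1 _ 1 (fun k hk => jR11 k (by omega))
  have jR211 : ∀ k : ℕ, k ≤ 1 → iteratedFDeriv ℝ k (Dv e2 (Dv e1 (Dv e1 (RR)))) ((0 : ℝ), (0 : ℝ)) = 0 :=
    jet_dv smR11 e2 _ 1 (fun k hk => jR11 k (by omega))
  have jR122 : ∀ k : ℕ, k ≤ 1 → iteratedFDeriv ℝ k (Dv e1 (Dv e2 (Dv e2 (RR)))) ((0 : ℝ), (0 : ℝ)) = 0 :=
    jet_dv smR22 e1 _ 1 (fun k hk => jR22 k (by omega))
  have jR222 : ∀ k : ℕ, k ≤ 1 → iteratedFDeriv ℝ k (Dv e2 (Dv e2 (Dv e2 (RR)))) ((0 : ℝ), (0 : ℝ)) = 0 :=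
    jet_dv smR22 e2 _ 1 (fun k hk => jR22 k (by omega))
  have vR1 : Dv e1 (RR) ((0 : ℝ), (0 : ℝ)) = 0 :=
    jet_dv_zero smR e1 _ 3 (fun k hk => jR k (by omega))
  have vR2 : Dv e2 (RR) ((0 : ℝ), (0 : ℝ)) = 0 :=
    jet_dv_zero smR e2 _ 3 (fun k hk => jR k (by omega))
  have vR11 : Dv e1 (Dv e1 (RR)) ((0 : ℝ), (0 : ℝ)) = 0 :=
    jet_dv_zero smR1 e1 _ 2 (fun k hk => jR1 k (by omega))
  have vR21 : Dv e2 (Dv e1 (RR)) ((0 : ℝ), (0 : ℝ)) = 0 :=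
    jet_dv_zero smR1 e2 _ 2 (fun k hk => jR1 k (by omega))
  have vR12 : Dv e1 (Dv e2 (RR)) ((0 : ℝ), (0 : ℝ)) = 0 :=
    jet_dv_zero smR2 e1 _ 2 (fun k hk => jR2 k (by omega))
  have vR22 : Dv e2 (Dv e2 (RR)) ((0 : ℝ), (0 : ℝ)) = 0 :=
    jet_dv_zero smR2 e2 _ 2 (fun k hk => jR2 k (by omega))
  have vR111 : Dv e1 (Dv e1 (Dv e1 (RR))) ((0 : ℝ), (0 : ℝ)) = 0 :=
    jet_dv_zero smR11 e1 _ 1 (fun k hk => jR11 k (by omega))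
  have vR211 : Dv e2 (Dv e1 (Dv e1 (RR))) ((0 : ℝ), (0 : ℝ)) = 0 :=
    jet_dv_zero smR11 e2 _ 1 (fun k hk => jR11 k (by omega))
  have vR122 : Dv e1 (Dv e2 (Dv e2 (RR))) ((0 : ℝ), (0 : ℝ)) = 0 :=
    jet_dv_zero smR22 e1 _ 1 (fun k hk => jR22 k (by omega))
  have vR222 : Dv e2 (Dv e2 (Dv e2 (RR))) ((0 : ℝ), (0 : ℝ)) = 0 :=
    jet_dv_zero smR22 e2 _ 1 (fun k hk => jR22 k (by omega))
  have vR121 : Dv e1 (Dv e2 (Dv e1 (RR))) ((0 : ℝ), (0 : ℝ)) = 0 :=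
    jet_dv_zero smR21 e1 _ 1 (fun k hk => jR21 k (by omega))
  have vR221 : Dv e2 (Dv e2 (Dv e1 (RR))) ((0 : ℝ), (0 : ℝ)) = 0 :=
    jet_dv_zero smR21 e2 _ 1 (fun k hk => jR21 k (by omega))
  have vR112 : Dv e1 (Dv e1 (Dv e2 (RR))) ((0 : ℝ), (0 : ℝ)) = 0 :=
    jet_dv_zero smR12 e1 _ 1 (fun k hk => jR12 k (by omega))
  have vR212 : Dv e2 (Dv e1 (Dv e2 (RR))) ((0 : ℝ), (0 : ℝ)) = 0 :=
    jet_dv_zero smR12 e2 _ 1 (fun k hk => jR12 k (by omega))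
  have vR1111 : Dv e1 (Dv e1 (Dv e1 (Dv e1 (RR)))) ((0 : ℝ), (0 : ℝ)) = 0 :=
    jet_dv_zero smR111 e1 _ 0 (fun k hk => jR111 k (by omega))
  have vR2111 : Dv e2 (Dv e1 (Dv e1 (Dv e1 (RR)))) ((0 : ℝ), (0 : ℝ)) = 0 :=
    jet_dv_zero smR111 e2 _ 0 (fun k hk => jR111 k (by omega))
  have vR1211 : Dv e1 (Dv e2 (Dv e1 (Dv e1 (RR)))) ((0 : ℝ), (0 : ℝ)) = 0 :=
    jet_dv_zero smR211 e1 _ 0 (fun k hk => jR211 k (by omega))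
  have vR2211 : Dv e2 (Dv e2 (Dv e1 (Dv e1 (RR)))) ((0 : ℝ), (0 : ℝ)) = 0 :=
    jet_dv_zero smR211 e2 _ 0 (fun k hk => jR211 k (by omega))
  have vR1122 : Dv e1 (Dv e1 (Dv e2 (Dv e2 (RR)))) ((0 : ℝ), (0 : ℝ)) = 0 :=
    jet_dv_zero smR122 e1 _ 0 (fun k hk => jR122 k (by omega))
  have vR2122 : Dv e2 (Dv e1 (Dv e2 (Dv e2 (RR)))) ((0 : ℝ), (0 : ℝ)) = 0 :=
    jet_dv_zero smR122 e2 _ 0 (fun k hk => jR122 k (by omega))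
  have vR1222 : Dv e1 (Dv e2 (Dv e2 (Dv e2 (RR)))) ((0 : ℝ), (0 : ℝ)) = 0 :=
    jet_dv_zero smR222 e1 _ 0 (fun k hk => jR222 k (by omega))
  have vR2222 : Dv e2 (Dv e2 (Dv e2 (Dv e2 (RR)))) ((0 : ℝ), (0 : ℝ)) = 0 :=
    jet_dv_zero smR222 e2 _ 0 (fun k hk => jR222 k (by omega))
  have hid1 : Dv e1 (HH) = fun p => (fun p : ℝ × ℝ => (0 : ℝ) * (p.1 ^ 0 * p.2 ^ 0) + ((1) * (p.1 ^ 1 * p.2 ^ 0) + ((0 : ℝ) * (p.1 ^ 0 * p.2 ^ 1) + ((1/2 * σ) * (p.1 ^ 2 * p.2 ^ 0) + ((0 : ℝ) * (p.1 ^ 1 * p.2 ^ 1) + ((-1/2 * ε * σ) * (p.1 ^ 0 * p.2 ^ 2) + ((1/6 * q40) * (p.1 ^ 3 * p.2 ^ 0) + ((1/2 * q31) * (p.1 ^ 2 * p.2 ^ 1) + ((1/2 * q22) * (p.1 ^ 1 * p.2 ^ 2) + ((1/6 * q13) * (p.1 ^ 0 * p.2 ^ 3) + ((0 : ℝ) *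 (p.1 ^ 4 * p.2 ^ 0) + ((0 : ℝ) * (p.1 ^ 3 * p.2 ^ 1) + ((0 : ℝ) * (p.1 ^ 2 * p.2 ^ 2) + ((0 : ℝ) * (p.1 ^ 1 * p.2 ^ 3) + ((0 : ℝ) * (p.1 ^ 0 * p.2 ^ 4)))))))))))))))) p + Dv e1 (RR) p := by
    funext p
    rw [hHHdef]
    rw [Dv_add e1 (by fun_prop) (smR.differentiable (by simp) p)]
    rw [show (fun q : ℝ × ℝ => (1/2) * (q.1 ^ 2 + ε * q.2 ^ 2) + (σ/6) * (q.1 ^ 3 - 3 * ε * q.1 * q.2 ^ 2) + (1/24) * (q40 * q.1 ^ 4 + 4 * q31 * q.1 ^ 3 * q.2 + 6 * q22 * q.1 ^ 2 * q.2 ^ 2 + 4 * q13 * q.1 * q.2 ^ 3 + q04 * q.2 ^ 4)) = (fun p : ℝ × ℝ => (0 : ℝ) * (p.1 ^ 0 * p.2 ^ 0) + ((0 : ℝ) * (p.1 ^ 1 * p.2 ^ 0) + ((0 : ℝ) * (p.1 ^ 0 * p.2 ^ 1) + ((1/2) * (p.1 ^ 2 * p.2 ^ 0) + ((0 : ℝ)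 * (p.1 ^ 1 * p.2 ^ 1) + ((1/2 * ε) * (p.1 ^ 0 * p.2 ^ 2) + ((1/6 * σ) * (p.1 ^ 3 * p.2 ^ 0) + ((0 : ℝ) * (p.1 ^ 2 * p.2 ^ 1) + ((-1/2 * ε * σ) * (p.1 ^ 1 * p.2 ^ 2) + ((0 : ℝ) * (p.1 ^ 0 * p.2 ^ 3) + ((1/24 * q40) * (p.1 ^ 4 * p.2 ^ 0) + ((1/6 * q31) * (p.1 ^ 3 * p.2 ^ 1) + ((1/4 * q22) * (p.1 ^ 2 * p.2 ^ 2) + ((1/6 * q13) * (p.1 ^ 1 * p.2 ^ 3) + ((1/24 * q04) * (p.1 ^ 0 * p.2 ^ 4)))))))))))))))) from by funext q; ring]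
    rw [Dv_P15_e1]
    ring
  have hid2 : Dv e2 (HH) = fun p => (fun p : ℝ × ℝ => (0 : ℝ) * (p.1 ^ 0 * p.2 ^ 0) + ((0 : ℝ) * (p.1 ^ 1 * p.2 ^ 0) + ((ε) * (p.1 ^ 0 * p.2 ^ 1) + ((0 : ℝ) * (p.1 ^ 2 * p.2 ^ 0) + ((-1 * ε * σ) * (p.1 ^ 1 * p.2 ^ 1) + ((0 : ℝ) * (p.1 ^ 0 * p.2 ^ 2) + ((1/6 * q31) * (p.1 ^ 3 * p.2 ^ 0) + ((1/2 * q22) * (p.1 ^ 2 * p.2 ^ 1) + ((1/2 * q13) * (p.1 ^ 1 * p.2 ^ 2) + ((1/6 * q04) * (p.1 ^ 0 * p.2 ^ 3) + ((0 : ℝ) * (p.1 ^ 4 * p.2 ^ 0) + ((0 : ℝ) * (p.1 ^ 3 * p.2 ^ 1) + ((0 : ℝ) * (p.1 ^ 2 * p.2 ^ 2) + ((0 : ℝ) * (p.1 ^ 1 * p.2 ^ 3) + ((0 : ℝ) * (p.1 ^ 0 * p.2 ^ 4)))))))))))))))) p + Dv e2 (RR) p := by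
    funext p
    rw [hHHdef]
    rw [Dv_add e2 (by fun_prop) (smR.differentiable (by simp) p)]
    rw [show (fun q : ℝ × ℝ => (1/2) * (q.1 ^ 2 + ε * q.2 ^ 2) + (σ/6) * (q.1 ^ 3 - 3 * ε * q.1 * q.2 ^ 2) + (1/24) * (q40 * q.1 ^ 4 + 4 * q31 * q.1 ^ 3 * q.2 + 6 * q22 * q.1 ^ 2 * q.2 ^ 2 + 4 * q13 * q.1 * q.2 ^ 3 + q04 * q.2 ^ 4)) = (fun p : ℝ × ℝ => (0 : ℝ) * (p.1 ^ 0 * p.2 ^ 0) + ((0 : ℝ) * (p.1 ^ 1 * p.2 ^ 0) + ((0 : ℝ) * (p.1 ^ 0 * p.2 ^ 1) + ((1/2) * (p.1 ^ 2 * p.2 ^ 0) + ((0 : ℝ) * (p.1 ^ 1 * p.2 ^ 1) + ((1/2 * ε) * (p.1 ^ 0 * p.2 ^ 2) + ((1/6 * σ) * (p.1 ^ 3 * p.2 ^ 0) + ((0 : ℝ) * (p.1 ^ 2 * p.2 ^ 1) + ((-1/2 * ε * σ) * (p.1 ^ 1 * p.2 ^ 2) + ((0 : ℝ) * (p.1 ^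 0 * p.2 ^ 3) + ((1/24 * q40) * (p.1 ^ 4 * p.2 ^ 0) + ((1/6 * q31) * (p.1 ^ 3 * p.2 ^ 1) + ((1/4 * q22) * (p.1 ^ 2 * p.2 ^ 2) + ((1/6 * q13) * (p.1 ^ 1 * p.2 ^ 3) + ((1/24 * q04) * (p.1 ^ 0 * p.2 ^ 4)))))))))))))))) from by funext q; ring]
    rw [Dv_P15_e2]
    ring
  have hid11 : Dv e1 (Dv e1 (HH)) = fun p => (fun p : ℝ × ℝ => (1) * (p.1 ^ 0 * p.2 ^ 0) + ((σ) * (p.1 ^ 1 * p.2 ^ 0) + ((0 : ℝ) * (p.1 ^ 0 * p.2 ^ 1) + ((1/2 * q40) * (p.1 ^ 2 * p.2 ^ 0) + ((q31) * (p.1 ^ 1 * p.2 ^ 1) + ((1/2 * q22) * (p.1 ^ 0 * p.2 ^ 2) + ((0 : ℝ) * (p.1 ^ 3 * p.2 ^ 0) + ((0 : ℝ) * (p.1 ^ 2 * p.2 ^ 1) + ((0 : ℝ) * (p.1 ^ 1 * p.2 ^ 2) + ((0 : ℝ) * (p.1 ^ 0 * p.2 ^ 3) + ((0 : ℝ) *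 (p.1 ^ 4 * p.2 ^ 0) + ((0 : ℝ) * (p.1 ^ 3 * p.2 ^ 1) + ((0 : ℝ) * (p.1 ^ 2 * p.2 ^ 2) + ((0 : ℝ) * (p.1 ^ 1 * p.2 ^ 3) + ((0 : ℝ) * (p.1 ^ 0 * p.2 ^ 4)))))))))))))))) p + Dv e1 (Dv e1 (RR)) p := by
    funext p
    rw [hid1]
    rw [Dv_add e1 (by fun_prop) (smR1.differentiable (by simp) p)]
    rw [Dv_P15_e1]
    ring
  have hid21 : Dv e2 (Dv e1 (HH)) = fun p => (fun p : ℝ × ℝ => (0 : ℝ) * (p.1 ^ 0 * p.2 ^ 0) + ((0 : ℝ) * (p.1 ^ 1 * p.2 ^ 0) + ((-1 * ε * σ) * (p.1 ^ 0 * p.2 ^ 1) + ((1/2 * q31) * (p.1 ^ 2 * p.2 ^ 0) + ((q22) * (p.1 ^ 1 * p.2 ^ 1) + ((1/2 * q13) * (p.1 ^ 0 * p.2 ^ 2) + ((0 : ℝ) * (p.1 ^ 3 * p.2 ^ 0) + ((0 : ℝ) * (p.1 ^ 2 * p.2 ^ 1) + ((0 : ℝ) * (p.1 ^ 1 * p.2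 ^ 2) + ((0 : ℝ) * (p.1 ^ 0 * p.2 ^ 3) + ((0 : ℝ) * (p.1 ^ 4 * p.2 ^ 0) + ((0 : ℝ) * (p.1 ^ 3 * p.2 ^ 1) + ((0 : ℝ) * (p.1 ^ 2 * p.2 ^ 2) + ((0 : ℝ) * (p.1 ^ 1 * p.2 ^ 3) + ((0 : ℝ) * (p.1 ^ 0 * p.2 ^ 4)))))))))))))))) p + Dv e2 (Dv e1 (RR)) p := by
    funext p
    rw [hid1]
    rw [Dv_add e2 (by fun_prop) (smR1.differentiable (by simp) p)]
    rw [Dv_P15_e2]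
    ring
  have hid12 : Dv e1 (Dv e2 (HH)) = fun p => (fun p : ℝ × ℝ => (0 : ℝ) * (p.1 ^ 0 * p.2 ^ 0) + ((0 : ℝ) * (p.1 ^ 1 * p.2 ^ 0) + ((-1 * ε * σ) * (p.1 ^ 0 * p.2 ^ 1) + ((1/2 * q31) * (p.1 ^ 2 * p.2 ^ 0) + ((q22) * (p.1 ^ 1 * p.2 ^ 1) + ((1/2 * q13) * (p.1 ^ 0 * p.2 ^ 2) + ((0 : ℝ) * (p.1 ^ 3 * p.2 ^ 0) + ((0 : ℝ) * (p.1 ^ 2 * p.2 ^ 1) + ((0 : ℝ) * (p.1 ^ 1 * p.2 ^ 2) + ((0 : ℝ) * (p.1 ^ 0 * p.2 ^ 3) + ((0 : ℝ) * (p.1 ^ 4 * p.2 ^ 0) + ((0 : ℝ) * (p.1 ^ 3 * p.2 ^ 1) + ((0 : ℝ) * (p.1 ^ 2 * p.2 ^ 2) + ((0 : ℝ) * (p.1 ^ 1 * p.2 ^ 3) + ((0 : ℝ) * (p.1 ^ 0 * p.2 ^ 4)))))))))))))))) p + Dv e1 (Dv e2 (RR)) p := by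
    funext p
    rw [hid2]
    rw [Dv_add e1 (by fun_prop) (smR2.differentiable (by simp) p)]
    rw [Dv_P15_e1]
    ring
  have hid22 : Dv e2 (Dv e2 (HH)) = fun p => (fun p : ℝ × ℝ => (ε) * (p.1 ^ 0 * p.2 ^ 0) + ((-1 * ε * σ) * (p.1 ^ 1 * p.2 ^ 0) + ((0 : ℝ) * (p.1 ^ 0 * p.2 ^ 1) + ((1/2 * q22) * (p.1 ^ 2 * p.2 ^ 0) + ((q13) * (p.1 ^ 1 * p.2 ^ 1) + ((1/2 * q04) * (p.1 ^ 0 * p.2 ^ 2) + ((0 : ℝ) * (p.1 ^ 3 * p.2 ^ 0) + ((0 : ℝ) * (p.1 ^ 2 * p.2 ^ 1) + ((0 : ℝ) * (p.1 ^ 1 * p.2 ^ 2) + ((0 : ℝ) * (p.1 ^ 0 * p.2 ^ 3) + ((0 : ℝ) * (p.1 ^ 4 * p.2 ^ 0) + ((0 : ℝ) * (p.1 ^ 3 * p.2 ^ 1) + ((0 : ℝ) * (p.1 ^ 2 * p.2 ^ 2) + ((0 : ℝ) * (p.1 ^ 1 * p.2 ^ 3) + ((0 : ℝ) * (p.1 ^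 0 * p.2 ^ 4)))))))))))))))) p + Dv e2 (Dv e2 (RR)) p := by
    funext p
    rw [hid2]
    rw [Dv_add e2 (by fun_prop) (smR2.differentiable (by simp) p)]
    rw [Dv_P15_e2]
    ring
  have hid111 : Dv e1 (Dv e1 (Dv e1 (HH))) = fun p => (fun p : ℝ × ℝ => (σ) * (p.1 ^ 0 * p.2 ^ 0) + ((q40) * (p.1 ^ 1 * p.2 ^ 0) + ((q31) * (p.1 ^ 0 * p.2 ^ 1) + ((0 : ℝ) * (p.1 ^ 2 * p.2 ^ 0) + ((0 : ℝ) * (p.1 ^ 1 * p.2 ^ 1) + ((0 : ℝ) * (p.1 ^ 0 * p.2 ^ 2) + ((0 : ℝ) * (p.1 ^ 3 * p.2 ^ 0) + ((0 : ℝ) * (p.1 ^ 2 * p.2 ^ 1) + ((0 : ℝ) * (p.1 ^ 1 * p.2 ^ 2) + ((0 : ℝ) * (p.1 ^ 0 * p.2 ^ 3) + ((0 : ℝ) * (p.1 ^ 4 * p.2 ^ 0) + ((0 : ℝ) * (p.1 ^ 3 * p.2 ^ 1) + ((0 : ℝ) * (p.1 ^ 2 * p.2 ^ 2) + ((0 :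 ℝ) * (p.1 ^ 1 * p.2 ^ 3) + ((0 : ℝ) * (p.1 ^ 0 * p.2 ^ 4)))))))))))))))) p + Dv e1 (Dv e1 (Dv e1 (RR))) p := by
    funext p
    rw [hid11]
    rw [Dv_add e1 (by fun_prop) (smR11.differentiable (by simp) p)]
    rw [Dv_P15_e1]
    ring
  have hid211 : Dv e2 (Dv e1 (Dv e1 (HH))) = fun p => (fun p : ℝ × ℝ => (0 : ℝ) * (p.1 ^ 0 * p.2 ^ 0) + ((q31) * (p.1 ^ 1 * p.2 ^ 0) + ((q22) * (p.1 ^ 0 * p.2 ^ 1) + ((0 : ℝ) * (p.1 ^ 2 * p.2 ^ 0) + ((0 : ℝ) * (p.1 ^ 1 * p.2 ^ 1) + ((0 : ℝ) * (p.1 ^ 0 * p.2 ^ 2) + ((0 : ℝ) * (p.1 ^ 3 * p.2 ^ 0) + ((0 : ℝ) * (p.1 ^ 2 * p.2 ^ 1) + ((0 : ℝ) * (p.1 ^ 1 * p.2 ^ 2) + ((0 : ℝ) * (p.1 ^ 0 * p.2 ^ 3) + ((0 : ℝ) * (p.1 ^ 4 * p.2 ^ 0) + ((0 : ℝ) * (p.1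 ^ 3 * p.2 ^ 1) + ((0 : ℝ) * (p.1 ^ 2 * p.2 ^ 2) + ((0 : ℝ) * (p.1 ^ 1 * p.2 ^ 3) + ((0 : ℝ) * (p.1 ^ 0 * p.2 ^ 4)))))))))))))))) p + Dv e2 (Dv e1 (Dv e1 (RR))) p := by
    funext p
    rw [hid11]
    rw [Dv_add e2 (by fun_prop) (smR11.differentiable (by simp) p)]
    rw [Dv_P15_e2]
    ring
  have hid122 : Dv e1 (Dv e2 (Dv e2 (HH))) = fun p => (fun p : ℝ × ℝ => (-1 * ε * σ) * (p.1 ^ 0 * p.2 ^ 0) + ((q22) * (p.1 ^ 1 * p.2 ^ 0) + ((q13) * (p.1 ^ 0 * p.2 ^ 1) + ((0 : ℝ) * (p.1 ^ 2 * p.2 ^ 0) + ((0 : ℝ) * (p.1 ^ 1 * p.2 ^ 1) + ((0 : ℝ) * (p.1 ^ 0 * p.2 ^ 2) + ((0 : ℝ) * (p.1 ^ 3 * p.2 ^ 0) + ((0 : ℝ) * (p.1 ^ 2 * p.2 ^ 1) + ((0 : ℝ) * (p.1 ^ 1 * p.2 ^ 2) + ((0 : ℝ) * (p.1 ^ 0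 * p.2 ^ 3) + ((0 : ℝ) * (p.1 ^ 4 * p.2 ^ 0) + ((0 : ℝ) * (p.1 ^ 3 * p.2 ^ 1) + ((0 : ℝ) * (p.1 ^ 2 * p.2 ^ 2) + ((0 : ℝ) * (p.1 ^ 1 * p.2 ^ 3) + ((0 : ℝ) * (p.1 ^ 0 * p.2 ^ 4)))))))))))))))) p + Dv e1 (Dv e2 (Dv e2 (RR))) p := by
    funext p
    rw [hid22]
    rw [Dv_add e1 (by fun_prop) (smR22.differentiable (by simp) p)]
    rw [Dv_P15_e1]
    ring
  have hid222 : Dv e2 (Dv e2 (Dv e2 (HH))) = fun p => (fun p : ℝ × ℝ => (0 : ℝ) * (p.1 ^ 0 * p.2 ^ 0) + ((q13) * (p.1 ^ 1 * p.2 ^ 0) + ((q04) * (p.1 ^ 0 * p.2 ^ 1) + ((0 : ℝ) * (p.1 ^ 2 * p.2 ^ 0) + ((0 : ℝ) * (p.1 ^ 1 * p.2 ^ 1) + ((0 : ℝ) * (p.1 ^ 0 * p.2 ^ 2) + ((0 : ℝ) * (p.1 ^ 3 * p.2 ^ 0) + ((0 : ℝ) * (p.1 ^ 2 * p.2 ^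 1) + ((0 : ℝ) * (p.1 ^ 1 * p.2 ^ 2) + ((0 : ℝ) * (p.1 ^ 0 * p.2 ^ 3) + ((0 : ℝ) * (p.1 ^ 4 * p.2 ^ 0) + ((0 : ℝ) * (p.1 ^ 3 * p.2 ^ 1) + ((0 : ℝ) * (p.1 ^ 2 * p.2 ^ 2) + ((0 : ℝ) * (p.1 ^ 1 * p.2 ^ 3) + ((0 : ℝ) * (p.1 ^ 0 * p.2 ^ 4)))))))))))))))) p + Dv e2 (Dv e2 (Dv e2 (RR))) p := by
    funext p
    rw [hid22]
    rw [Dv_add e2 (by fun_prop) (smR22.differentiable (by simp) p)]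
    rw [Dv_P15_e2]
    ring
  have hvA0 : Dv e1 (HH) ((0 : ℝ), (0 : ℝ)) = 0 := by
    rw [hid1]
    simp only [vR1]
    norm_num
    all_goals ring
  have hvB0 : Dv e2 (HH) ((0 : ℝ), (0 : ℝ)) = 0 := by
    rw [hid2]
    simp only [vR2]
    norm_num
    all_goals ring
  have hvL0 : Dv e1 (Dv e1 (HH)) ((0 : ℝ), (0 : ℝ)) = 1 := by
    rw [hid11]
    simp only [vR11]
    norm_num
    all_goals ring
  have hvM0 : Dv e2 (Dv e1 (HH)) ((0 : ℝ), (0 : ℝ)) = 0 := by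
    rw [hid21]
    simp only [vR21]
    norm_num
    all_goals ring
  have hvM10 : Dv e1 (Dv e2 (HH)) ((0 : ℝ), (0 : ℝ)) = 0 := by
    rw [hid12]
    simp only [vR12]
    norm_num
    all_goals ring
  have hvN0 : Dv e2 (Dv e2 (HH)) ((0 : ℝ), (0 : ℝ)) = ε := by
    rw [hid22]
    simp only [vR22]
    norm_num
    all_goals ring
  have hc111 : Dv e1 (Dv e1 (Dv e1 (HH))) ((0 : ℝ), (0 : ℝ)) = σ := by
    rw [hid111]
    simp only [vR111]
    norm_num
    all_goals ring
  have hc211 : Dv e2 (Dv e1 (Dv e1 (HH))) ((0 : ℝ), (0 : ℝ)) = 0 := by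
    rw [hid211]
    simp only [vR211]
    norm_num
    all_goals ring
  have hc121 : Dv e1 (Dv e2 (Dv e1 (HH))) ((0 : ℝ), (0 : ℝ)) = 0 := by
    rw [hid21]
    rw [Dv_add e1 (by fun_prop) (smR21.differentiable (by simp) ((0 : ℝ), (0 : ℝ)))]
    rw [Dv_P15_e1]
    simp only [vR121]
    norm_num
    all_goals ring
  have hc221 : Dv e2 (Dv e2 (Dv e1 (HH))) ((0 : ℝ), (0 : ℝ)) = -ε * σ := by
    rw [hid21]
    rw [Dv_add e2 (by fun_prop) (smR21.differentiable (by simp) ((0 : ℝ), (0 : ℝ)))]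
    rw [Dv_P15_e2]
    simp only [vR221]
    norm_num
    all_goals ring
  have hc112 : Dv e1 (Dv e1 (Dv e2 (HH))) ((0 : ℝ), (0 : ℝ)) = 0 := by
    rw [hid12]
    rw [Dv_add e1 (by fun_prop) (smR12.differentiable (by simp) ((0 : ℝ), (0 : ℝ)))]
    rw [Dv_P15_e1]
    simp only [vR112]
    norm_num
    all_goals ring
  have hc212 : Dv e2 (Dv e1 (Dv e2 (HH))) ((0 : ℝ), (0 : ℝ)) = -ε * σ := by
    rw [hid12]
    rw [Dv_add e2 (by fun_prop) (smR12.differentiable (by simp) ((0 : ℝ), (0 : ℝ)))]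
    rw [Dv_P15_e2]
    simp only [vR212]
    norm_num
    all_goals ring
  have hc122 : Dv e1 (Dv e2 (Dv e2 (HH))) ((0 : ℝ), (0 : ℝ)) = -ε * σ := by
    rw [hid122]
    simp only [vR122]
    norm_num
    all_goals ring
  have hc222 : Dv e2 (Dv e2 (Dv e2 (HH))) ((0 : ℝ), (0 : ℝ)) = 0 := by
    rw [hid222]
    simp only [vR222]
    norm_num
    all_goals ring
  have hd1111 : Dv e1 (Dv e1 (Dv e1 (Dv e1 (HH)))) ((0 : ℝ), (0 : ℝ)) = q40 := by
    rw [hid111]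
    rw [Dv_add e1 (by fun_prop) (smR111.differentiable (by simp) ((0 : ℝ), (0 : ℝ)))]
    rw [Dv_P15_e1]
    simp only [vR1111]
    norm_num
    all_goals ring
  have hd2111 : Dv e2 (Dv e1 (Dv e1 (Dv e1 (HH)))) ((0 : ℝ), (0 : ℝ)) = q31 := by
    rw [hid111]
    rw [Dv_add e2 (by fun_prop) (smR111.differentiable (by simp) ((0 : ℝ), (0 : ℝ)))]
    rw [Dv_P15_e2]
    simp only [vR2111]
    norm_num
    all_goals ring
  have hd1211 : Dv e1 (Dv e2 (Dv e1 (Dv e1 (HH)))) ((0 : ℝ), (0 : ℝ)) = q31 := by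
    rw [hid211]
    rw [Dv_add e1 (by fun_prop) (smR211.differentiable (by simp) ((0 : ℝ), (0 : ℝ)))]
    rw [Dv_P15_e1]
    simp only [vR1211]
    norm_num
    all_goals ring
  have hd2211 : Dv e2 (Dv e2 (Dv e1 (Dv e1 (HH)))) ((0 : ℝ), (0 : ℝ)) = q22 := by
    rw [hid211]
    rw [Dv_add e2 (by fun_prop) (smR211.differentiable (by simp) ((0 : ℝ), (0 : ℝ)))]
    rw [Dv_P15_e2]
    simp only [vR2211]
    norm_num
    all_goals ring
  have hd1122 : Dv e1 (Dv e1 (Dv e2 (Dv e2 (HH)))) ((0 : ℝ), (0 : ℝ)) = q22 := by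
    rw [hid122]
    rw [Dv_add e1 (by fun_prop) (smR122.differentiable (by simp) ((0 : ℝ), (0 : ℝ)))]
    rw [Dv_P15_e1]
    simp only [vR1122]
    norm_num
    all_goals ring
  have hd2122 : Dv e2 (Dv e1 (Dv e2 (Dv e2 (HH)))) ((0 : ℝ), (0 : ℝ)) = q13 := by
    rw [hid122]
    rw [Dv_add e2 (by fun_prop) (smR122.differentiable (by simp) ((0 : ℝ), (0 : ℝ)))]
    rw [Dv_P15_e2]
    simp only [vR2122]
    norm_num
    all_goals ring
  have hd1222 : Dv e1 (Dv e2 (Dv e2 (Dv e2 (HH)))) ((0 : ℝ), (0 : ℝ)) = q13 := by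
    rw [hid222]
    rw [Dv_add e1 (by fun_prop) (smR222.differentiable (by simp) ((0 : ℝ), (0 : ℝ)))]
    rw [Dv_P15_e1]
    simp only [vR1222]
    norm_num
    all_goals ring
  have hd2222 : Dv e2 (Dv e2 (Dv e2 (Dv e2 (HH)))) ((0 : ℝ), (0 : ℝ)) = q04 := by
    rw [hid222]
    rw [Dv_add e2 (by fun_prop) (smR222.differentiable (by simp) ((0 : ℝ), (0 : ℝ)))]
    rw [Dv_P15_e2]
    simp only [vR2222]
    norm_num
    all_goals ring
  obtain ⟨hl, hm, hn⟩ := core ε σ q40 q31 q22 q13 q04 hε HH hHH h hh'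
    hvA0 hvB0 hvL0 hvM0 hvM10 hvN0 hc111 hc211 hc121 hc221 hc112 hc212 hc122 hc222
    hd1111 hd2111 hd1211 hd2211 hd1122 hd2122 hd1222 hd2222
  rw [hl, hm, hn]
  rcases hε with he | he <;> subst he
  · refine ⟨⟨?_, ?_⟩, ?_⟩
    · rintro ⟨⟨h31, h44⟩, hpar⟩
      have hX : (q40 + q22 - 2 * σ ^ 2) * (q40 + q22 - 2 * σ ^ 2) = 0 := by
        linear_combination 16 * hpar + (q40 + q22 - 2 * σ ^ 2) * h44 + (q31 + q13) * h31
      have hX0 : q40 + q22 - 2 * σ ^ 2 = 0 := mul_self_eq_zero.mp hX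
      exact ⟨h31, h44, by linarith⟩
    · rintro ⟨h31, h44, h22⟩
      refine ⟨⟨h31, h44⟩, ?_⟩
      linear_combination ((1 * q22 + q04 - 2 * σ ^ 2) / 16) * h22 - ((q31 + q13) / 16) * h31
    · rintro ⟨h31, h44, h22⟩
      refine ⟨by linear_combination (1/4) * h22, by linear_combination (1/4) * h31,
        by linear_combination (1/4) * h22 - (1/4) * h44⟩
  · refine ⟨⟨?_, ?_⟩, ?_⟩
    · rintro ⟨⟨h31, h44⟩, hpar⟩
      have hX : (q22 - q40 + 2 * σ ^ 2) * (q22 - q40 + 2 * σ ^ 2) = 0 := by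
        linear_combination (-16) * hpar - (q22 - q40 + 2 * σ ^ 2) * h44 + (q13 - q31) * h31
      have hX0 : q22 - q40 + 2 * σ ^ 2 = 0 := mul_self_eq_zero.mp hX
      exact ⟨h31, h44, by linarith⟩
    · rintro ⟨h31, h44, h22⟩
      refine ⟨⟨h31, h44⟩, ?_⟩
      linear_combination ((-1 * q22 + q04 - 2 * σ ^ 2) / 16) * h22 + ((q13 - q31) / 16) * h31
    · rintro ⟨h31, h44, h22⟩
      refine ⟨by linear_combination (1/4) * h22, by linear_combination (-1/4) * h31,
        by linear_combination (-1/4) * h22 - (1/4) * h44⟩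

end
end
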